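/- arXiv:2006.01046 — 7 statements merged into one kernel-verified Lean document; each statement's English description precedes it below -/
import Mathlib

section
/- Let α ∈ ℂ with −1 < Re(α) < 0, let b > 0 be real, and let t ∈ ℝ. Then the improper integrals converge: the functions R ↦ (1/Γ(−α)) ∫_0^R u^(−α−1) e^(ib(t−u)) du tend, as R → ∞, to (ib)^α e^(ibt), where (ib)^α is defined by the principal branch of the complex power. -/
/-!
Rotate the contour. With `s = -α` and `f z = z ^ (s - 1) * exp (-i b z)`, Cauchy's theorem on the
rectangles `[δ, R] × [-H, 0]`, with `H → ∞` (`f` decays like `exp (b * im z)` in the lower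
half-plane), gives `∫_δ^R f = i G(R) - i G(δ)`, where `G c = ∫_0^∞ f (c - i v) dv` integrates down
the vertical ray from `c`. `G` is continuous (dominated by `v ^ (re s - 1) * exp (-b v)`), so
`δ → 0` is allowed, and `G R = O(R ^ (re s - 1)) → 0`. Finally `G 0 = (-i) ^ (s - 1) b ^ (-s) Γ(s)`
is Euler's integral, so `∫_0^R f → -i G(0) = (i b) ^ (-s) Γ(s)`; the factor `exp (i b t) / Γ(s)`
does the rest.
-/

open MeasureTheory Complex Filter Set intervalIntegral
open scoped Real Interval Topology

noncomputable section

namespace Complex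

lemma norm_cpow_le_exp_mul_rpow (z w : ℂ) :
    ‖z ^ w‖ ≤ Real.exp (π * |w.im|) * ‖z‖ ^ w.re := by
  refine (norm_cpow_le z w).trans ?_
  rw [div_eq_mul_inv, ← Real.exp_neg, mul_comm]
  gcongr
  calc -(z.arg * w.im) ≤ |z.arg| * |w.im| := by rw [← abs_mul]; exact neg_le_abs _
    _ ≤ π * |w.im| := by gcongr; exact abs_arg_le_pi z

lemma ofReal_mul_cpow {r : ℝ} (hr : 0 < r) (z w : ℂ) :
    ((r : ℂ) * z) ^ w = (r : ℂ) ^ w * z ^ w := by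
  rcases eq_or_ne z 0 with rfl | hz
  · rcases eq_or_ne w 0 with rfl | hw
    · simp
    · simp [zero_cpow hw]
  have hr' : (r : ℂ) ≠ 0 := ofReal_ne_zero.2 hr.ne'
  rw [cpow_def_of_ne_zero (mul_ne_zero hr' hz), cpow_def_of_ne_zero hr', cpow_def_of_ne_zero hz,
    log_ofReal_mul hr hz, ← ofReal_log hr.le, add_mul, exp_add]

end Complex

namespace OscillatoryGamma

def integrand (s : ℂ) (b : ℝ) (z : ℂ) : ℂ := z ^ (s - 1) * cexp (-(I * b * z))

def rayIntegral (s : ℂ) (b c : ℝ) : ℂ := ∫ v in Ioi (0 : ℝ), integrand s b (c - v * I)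

def rayBound (s : ℂ) (b v : ℝ) : ℝ :=
  Real.exp (π * |s.im|) * (v ^ (s.re - 1) * Real.exp (-b * v))

lemma norm_integrand_le (s : ℂ) (b : ℝ) (z : ℂ) :
    ‖integrand s b z‖ ≤ Real.exp (π * |s.im|) * (‖z‖ ^ (s.re - 1) * Real.exp (b * z.im)) := by
  have hexp : ‖cexp (-(I * b * z))‖ = Real.exp (b * z.im) := by
    rw [norm_exp]; simp
  calc ‖integrand s b z‖ = ‖z ^ (s - 1)‖ * Real.exp (b * z.im) := by
        rw [integrand, norm_mul, hexp]
    _ ≤ Real.exp (π * |s.im|) * ‖z‖ ^ (s.re - 1) * Real.exp (b * z.im) := by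
        gcongr
        simpa using norm_cpow_le_exp_mul_rpow z (s - 1)
    _ = _ := by ring

lemma norm_integrand_sub_mul_I_le {s : ℂ} (hs : s.re ≤ 1) (b : ℝ) {c v r : ℝ} (hr : 0 < r)
    (hrc : r ≤ ‖(c : ℂ) - v * I‖) :
    ‖integrand s b (c - v * I)‖ ≤
      Real.exp (π * |s.im|) * (r ^ (s.re - 1) * Real.exp (-b * v)) := by
  refine (norm_integrand_le s b _).trans ?_
  have him : ((c : ℂ) - v * I).im = -v := by simp
  rw [him, mul_neg, ← neg_mul]
  have hpow := Real.rpow_le_rpow_of_nonpos hr hrc (by linarith : s.re - 1 ≤ 0)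
  gcongr

lemma norm_integrand_sub_mul_I_le_rayBound {s : ℂ} (hs : s.re ≤ 1) (b : ℝ) {c v : ℝ}
    (hv : 0 < v) :
    ‖integrand s b (c - v * I)‖ ≤ rayBound s b v := by
  refine norm_integrand_sub_mul_I_le hs b hv ?_
  simpa [abs_of_pos hv] using abs_im_le_norm ((c : ℂ) - v * I)

section

variable {s : ℂ} {b : ℝ}

lemma integrableOn_rayBound (hs : 0 < s.re) (hb : 0 < b) :
    IntegrableOn (rayBound s b) (Ioi 0) := by
  have h := integrableOn_rpow_mul_exp_neg_mul_rpow (p := 1)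
    (by linarith : -1 < s.re - 1) one_pos hb
  simp only [Real.rpow_one] at h
  exact h.const_mul _

lemma tendsto_rayBound_atTop (hs : s.re < 1) (hb : 0 < b) :
    Tendsto (rayBound s b) atTop (𝓝 0) := by
  unfold rayBound
  have hpow : Tendsto (fun v : ℝ => v ^ (s.re - 1)) atTop (𝓝 0) := by
    simpa using tendsto_rpow_neg_atTop (y := 1 - s.re) (by linarith)
  have hexp : Tendsto (fun v : ℝ => Real.exp (-b * v)) atTop (𝓝 0) :=
    Real.tendsto_exp_atBot.comp (tendsto_id.const_mul_atTop_of_neg (neg_lt_zero.2 hb))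
  simpa using (hpow.mul hexp).const_mul (Real.exp (π * |s.im|))

lemma sub_mul_I_mem_slitPlane (c : ℝ) {v : ℝ} (hv : v ≠ 0) : (c : ℂ) - v * I ∈ slitPlane :=
  Or.inr (by simpa using hv)

lemma continuousAt_integrand {z : ℂ} (hz : z ∈ slitPlane) : ContinuousAt (integrand s b) z :=
  (continuousAt_cpow_const hz).mul (by fun_prop)

lemma integrableOn_integrand_ray (hs0 : 0 < s.re) (hs1 : s.re ≤ 1) (hb : 0 < b) (c : ℝ) :
    IntegrableOn (fun v : ℝ => integrand s b (c - v * I)) (Ioi 0) := by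
  have hcont : ContinuousOn (fun v : ℝ => integrand s b (c - v * I)) (Ioi 0) := fun v hv =>
    ((continuousAt_integrand (sub_mul_I_mem_slitPlane c (ne_of_gt hv))).comp
      (f := fun v : ℝ => (c : ℂ) - v * I) (by fun_prop)).continuousWithinAt
  refine (integrableOn_rayBound hs0 hb).mono' (hcont.aestronglyMeasurable measurableSet_Ioi) ?_
  filter_upwards [ae_restrict_mem measurableSet_Ioi] with v hv
  exact norm_integrand_sub_mul_I_le_rayBound hs1 b hv

lemma continuous_rayIntegral (hs0 : 0 < s.re) (hs1 : s.re ≤ 1) (hb : 0 < b) :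
    Continuous (rayIntegral s b) := by
  refine continuous_of_dominated (fun c => (integrableOn_integrand_ray hs0 hs1 hb c).1)
    (fun c => ?_) (integrableOn_rayBound hs0 hb) ?_
  · filter_upwards [ae_restrict_mem measurableSet_Ioi] with v hv
    exact norm_integrand_sub_mul_I_le_rayBound hs1 b hv
  · filter_upwards [ae_restrict_mem measurableSet_Ioi] with v hv
    exact continuous_iff_continuousAt.2 fun c =>
      (continuousAt_integrand (sub_mul_I_mem_slitPlane c (ne_of_gt hv))).comp
        (f := fun c : ℝ => (c : ℂ) - v * I) (by fun_prop)

lemma tendsto_integral_integrand_horizontal (hs : s.re < 1) (hb : 0 < b) (δ R : ℝ) :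
    Tendsto (fun H : ℝ => ∫ x in δ..R, integrand s b (x - H * I)) atTop (𝓝 0) := by
  refine squeeze_zero_norm' ?_ (by simpa using (tendsto_rayBound_atTop hs hb).mul_const |R - δ|)
  filter_upwards [eventually_gt_atTop 0] with H hH
  exact norm_integral_le_of_norm_le_const fun x _ =>
    norm_integrand_sub_mul_I_le_rayBound hs.le b hH

lemma tendsto_integral_integrand_vertical (hs0 : 0 < s.re) (hs1 : s.re ≤ 1) (hb : 0 < b)
    (c : ℝ) :
    Tendsto (fun H : ℝ => ∫ y in -H..0, integrand s b (c + y * I)) atTop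
      (𝓝 (rayIntegral s b c)) := by
  refine (intervalIntegral_tendsto_integral_Ioi 0 (integrableOn_integrand_ray hs0 hs1 hb c)
    tendsto_id).congr fun H => ?_
  simpa [sub_eq_add_neg] using integral_comp_neg (a := 0) (b := H)
    (fun y : ℝ => integrand s b (c + y * I))

lemma integral_integrand_eq_boundary_rect {δ R : ℝ} (hδ : 0 < δ) (hδR : δ ≤ R) (H : ℝ) :
    ∫ x in δ..R, integrand s b x =
      (∫ x in δ..R, integrand s b (x - H * I)) + I * (∫ y in -H..0, integrand s b (R + y * I))
        - I * ∫ y in -H..0, integrand s b (δ + y * I) := by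
  have hdiff : DifferentiableOn ℂ (integrand s b)
      ([[((δ : ℂ) - H * I).re, (R : ℂ).re]] ×ℂ [[((δ : ℂ) - H * I).im, (R : ℂ).im]]) := by
    rintro z ⟨hzre, -⟩
    have hre : 0 < z.re := by
      simp only [sub_re, ofReal_re, mul_re, ofReal_im, I_re, I_im, mul_zero, mul_one, sub_self,
        sub_zero, uIcc_of_le hδR] at hzre
      exact hδ.trans_le hzre.1
    exact (((hasDerivAt_id z).cpow_const (Or.inl hre)).differentiableAt.mul
      (by fun_prop)).differentiableWithinAt
  have hC := integral_boundary_rect_eq_zero_of_differentiableOn _ _ _ hdiff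
  simp only [sub_re, ofReal_re, mul_re, ofReal_im, I_re, I_im, mul_zero, mul_one, sub_self,
    sub_zero, sub_im, mul_im, zero_mul, add_zero, zero_sub, ofReal_neg, ofReal_zero, smul_eq_mul,
    neg_mul, ← sub_eq_add_neg] at hC
  linear_combination -hC

lemma integral_integrand_eq_rayIntegral_sub {δ R : ℝ} (hs0 : 0 < s.re) (hs1 : s.re < 1)
    (hb : 0 < b) (hδ : 0 < δ) (hδR : δ ≤ R) :
    ∫ x in δ..R, integrand s b x = I * rayIntegral s b R - I * rayIntegral s b δ := by
  have hlim := ((tendsto_integral_integrand_horizontal hs1 hb δ R).add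
    ((tendsto_integral_integrand_vertical hs0 hs1.le hb R).const_mul I)).sub
    ((tendsto_integral_integrand_vertical hs0 hs1.le hb δ).const_mul I)
  rw [zero_add] at hlim
  exact tendsto_nhds_unique (tendsto_const_nhds.congr
    (integral_integrand_eq_boundary_rect hδ hδR)) hlim

lemma integral_integrand_zero_eq_rayIntegral_sub {R : ℝ} (hs0 : 0 < s.re) (hs1 : s.re < 1)
    (hb : 0 < b) (hR : 0 < R) :
    ∫ x in (0 : ℝ)..R, integrand s b x = I * rayIntegral s b R - I * rayIntegral s b 0 := by
  have hint : IntegrableOn (fun x : ℝ => integrand s b x) [[0, R]] := by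
    rw [uIcc_of_le hR.le, ← intervalIntegrable_iff_integrableOn_Icc_of_le hR.le]
    exact (intervalIntegrable_cpow' (by simpa using hs0)).mul_continuousOn (by fun_prop)
  have hleft : Tendsto (fun δ : ℝ => ∫ x in δ..R, integrand s b x) (𝓝[>] 0)
      (𝓝 (∫ x in (0 : ℝ)..R, integrand s b x)) :=
    ((continuousOn_primitive_interval_left hint).continuousWithinAt
      left_mem_uIcc).mono_of_mem_nhdsWithin (by simpa [uIcc_of_le hR.le] using Icc_mem_nhdsGT hR)
  have hright : Tendsto (fun δ : ℝ => I * rayIntegral s b R - I * rayIntegral s b δ) (𝓝[>] 0)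
      (𝓝 (I * rayIntegral s b R - I * rayIntegral s b 0)) :=
    (((continuous_rayIntegral hs0 hs1.le hb).tendsto 0).mono_left nhdsWithin_le_nhds).const_mul I
      |>.const_sub _
  refine tendsto_nhds_unique hleft (hright.congr' ?_)
  filter_upwards [Ioc_mem_nhdsGT hR] with δ hδ
  exact (integral_integrand_eq_rayIntegral_sub hs0 hs1 hb hδ.1 hδ.2).symm

lemma tendsto_rayIntegral_atTop (hs : s.re < 1) (hb : 0 < b) :
    Tendsto (rayIntegral s b) atTop (𝓝 0) := by
  set K := Real.exp (π * |s.im|) * ∫ v in Ioi (0 : ℝ), Real.exp (-b * v)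
  have hbound : ∀ c : ℝ, 0 < c → ‖rayIntegral s b c‖ ≤ K * c ^ (s.re - 1) := by
    intro c hc
    calc ‖rayIntegral s b c‖
        ≤ ∫ v in Ioi (0 : ℝ), Real.exp (π * |s.im|) * (c ^ (s.re - 1) * Real.exp (-b * v)) := by
          refine norm_integral_le_of_norm_le
            (((exp_neg_integrableOn_Ioi 0 hb).const_mul _).const_mul _) (ae_of_all _ fun v => ?_)
          refine norm_integrand_sub_mul_I_le hs.le b hc ?_
          simpa [abs_of_pos hc] using abs_re_le_norm ((c : ℂ) - v * I)
      _ = K * c ^ (s.re - 1) := by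
          simp only [K, MeasureTheory.integral_const_mul]
          ring
  have hpow : Tendsto (fun c : ℝ => K * c ^ (s.re - 1)) atTop (𝓝 0) := by
    simpa using (tendsto_rpow_neg_atTop (y := 1 - s.re) (by linarith)).const_mul K
  refine squeeze_zero_norm' ?_ hpow
  filter_upwards [eventually_gt_atTop 0] with c hc
  exact hbound c hc

lemma rayIntegral_zero (hs : 0 < s.re) (hb : 0 < b) :
    I * rayIntegral s b 0 = -((I * b) ^ (-s) * Gamma s) := by
  have hI : (-I : ℂ) ≠ 0 := neg_ne_zero.2 I_ne_zero
  have hG : rayIntegral s b 0 = (-I) ^ (s - 1) * ((1 / (b : ℂ)) ^ s * Gamma s) := by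
    rw [rayIntegral, ← integral_cpow_mul_exp_neg_mul_Ioi hs hb,
      ← MeasureTheory.integral_const_mul]
    refine setIntegral_congr_fun measurableSet_Ioi fun v hv => ?_
    have hexp : -(I * b * ((0 : ℝ) - v * I)) = -(b * v : ℂ) := by
      push_cast
      linear_combination (b * v : ℂ) * I_sq
    rw [integrand, hexp, show ((0 : ℝ) : ℂ) - v * I = v * (-I) by push_cast; ring,
      ofReal_mul_cpow hv]
    ring
  have hrate : (I * b) ^ (-s) = (-I) ^ s * (1 / (b : ℂ)) ^ s := by
    have hinv : (I * b)⁻¹ = ((1 / b : ℝ) : ℂ) * (-I) := by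
      field_simp
      simp
    have harg : (I * b).arg ≠ π := by
      rw [arg_mul_real hb, arg_I]
      linarith [Real.pi_pos]
    rw [cpow_neg, ← inv_cpow _ _ harg, hinv, ofReal_mul_cpow (one_div_pos.2 hb), mul_comm]
    push_cast
    ring
  rw [hG, hrate, cpow_sub _ _ hI, cpow_one]
  field_simp

theorem tendsto_integral_integrand_atTop (hs0 : 0 < s.re) (hs1 : s.re < 1) (hb : 0 < b) :
    Tendsto (fun R : ℝ => ∫ u in (0 : ℝ)..R, integrand s b u) atTop
      (𝓝 ((I * b) ^ (-s) * Gamma s)) := by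
  have hlim := ((tendsto_rayIntegral_atTop hs1 hb).const_mul I).sub_const (I * rayIntegral s b 0)
  rw [mul_zero, zero_sub, rayIntegral_zero hs0 hb, neg_neg] at hlim
  refine hlim.congr' ?_
  filter_upwards [eventually_gt_atTop 0] with R hR
  rw [integral_integrand_zero_eq_rayIntegral_sub hs0 hs1 hb hR, rayIntegral_zero hs0 hb]

end

end OscillatoryGamma

end

open OscillatoryGamma

theorem rl_fracderiv_exp_boundary (α : ℂ) (hα1 : -1 < α.re) (hα2 : α.re < 0)
    (b : ℝ) (hb : 0 < b) (t : ℝ) :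
    Filter.Tendsto
      (fun R : ℝ => (1 / Complex.Gamma (-α)) *
        ∫ u in (0 : ℝ)..R,
          (u : ℂ) ^ (-α - 1) * Complex.exp (Complex.I * (b : ℂ) * ((t : ℂ) - (u : ℂ))))
      Filter.atTop
      (nhds ((Complex.I * (b : ℂ)) ^ α * Complex.exp (Complex.I * (b : ℂ) * (t : ℂ)))) := by
  have hs0 : 0 < (-α).re := by simp only [neg_re]; linarith
  have hs1 : (-α).re < 1 := by simp only [neg_re]; linarith
  have hΓ : Gamma (-α) ≠ 0 := Gamma_ne_zero_of_re_pos hs0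
  have hlim := (tendsto_integral_integrand_atTop hs0 hs1 hb).const_mul
    (cexp (I * b * t) / Gamma (-α))
  rw [neg_neg, show cexp (I * b * t) / Gamma (-α) * ((I * b) ^ α * Gamma (-α)) =
    (I * b) ^ α * cexp (I * b * t) by field_simp] at hlim
  refine hlim.congr fun R => ?_
  rw [← intervalIntegral.integral_const_mul, ← intervalIntegral.integral_const_mul]
  refine intervalIntegral.integral_congr fun u _ => ?_
  rw [integrand, show I * b * (t - u : ℂ) = I * b * t + -(I * b * u) by ring, exp_add]
  ring
end

section
/- Let α, k ∈ ℂ with Re(α) < 0 and Re(k) < 0, and let t ∈ ℝ. Then the function u ↦ u^(−α−1) e^(k(t+u)) is integrable on (0, ∞), and (1/Γ(−α)) ∫_0^∞ u^(−α−1) e^(k(t+u)) du = (−k)^α e^(kt), where (−k)^α is defined by the principal branch of the complex power. -/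
/-!
After factoring out `e^{kt}` one is left with `∫₀^∞ u^(a-1) e^{zu} du` for `Re a > 0`. For real
`z < 0` this is `(-z)^(-a) Γ(a)` by rescaling Euler's integral. Differentiating under the integral
sign shows that it is holomorphic in `z` on the half-plane `Re z < 0`, as is `(-z)^(-a) Γ(a)`, so
the identity theorem extends the formula to the whole half-plane.
-/

open MeasureTheory Set Filter Complex Topology

lemma norm_cpow_mul_cexp_mul {u : ℝ} (hu : 0 < u) (c z : ℂ) :
    ‖(u : ℂ) ^ c * cexp (z * u)‖ = u ^ c.re * Real.exp (z.re * u) := by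
  rw [norm_mul, norm_cpow_eq_rpow_re_of_pos hu, norm_exp, re_mul_ofReal]

lemma integrableOn_rpow_mul_exp_mul_Ioi {c b : ℝ} (hc : -1 < c) (hb : b < 0) :
    IntegrableOn (fun u : ℝ => u ^ c * Real.exp (b * u)) (Ioi 0) := by
  simpa using integrableOn_rpow_mul_exp_neg_mul_rpow hc zero_lt_one (neg_pos.mpr hb)

lemma continuousOn_cpow_mul_cexp_mul (c z : ℂ) :
    ContinuousOn (fun u : ℝ => (u : ℂ) ^ c * cexp (z * u)) (Ioi 0) := fun u hu =>
  ((continuousAt_ofReal_cpow_const u c (Or.inr hu.ne')).mul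
    (by fun_prop)).continuousWithinAt

lemma integrableOn_cpow_mul_cexp_mul_Ioi {c z : ℂ} (hc : -1 < c.re) (hz : z.re < 0) :
    IntegrableOn (fun u : ℝ => (u : ℂ) ^ c * cexp (z * u)) (Ioi 0) := by
  refine Integrable.mono' (integrableOn_rpow_mul_exp_mul_Ioi hc hz)
    ((continuousOn_cpow_mul_cexp_mul c z).aestronglyMeasurable measurableSet_Ioi) ?_
  filter_upwards [ae_restrict_mem measurableSet_Ioi] with u hu
  exact (norm_cpow_mul_cexp_mul hu c z).le

lemma hasDerivAt_integral_cpow_mul_cexp_mul_Ioi {c z₀ : ℂ} (hc : -1 < c.re) (hz₀ : z₀.re < 0) :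
    HasDerivAt (fun z : ℂ => ∫ u in Ioi (0 : ℝ), (u : ℂ) ^ c * cexp (z * u))
      (∫ u in Ioi (0 : ℝ), (u : ℂ) ^ (c + 1) * cexp (z₀ * u)) z₀ := by
  set b := z₀.re / 2 with hb_def
  have hb : b < 0 := by linarith
  have hre : ∀ z ∈ Metric.ball z₀ (-b), z.re < b := fun z hz => by
    have := (abs_re_le_norm (z - z₀)).trans_lt (mem_ball_iff_norm.mp hz)
    rw [sub_re] at this
    linarith [le_abs_self (z.re - z₀.re)]
  have h_deriv : ∀ᵐ u : ℝ ∂volume.restrict (Ioi (0 : ℝ)), ∀ z ∈ Metric.ball z₀ (-b),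
      HasDerivAt (fun z : ℂ => (u : ℂ) ^ c * cexp (z * u))
        ((u : ℂ) ^ (c + 1) * cexp (z * u)) z := by
    filter_upwards [ae_restrict_mem measurableSet_Ioi] with u (hu : 0 < u) z _
    rw [cpow_add _ _ (ofReal_ne_zero.mpr hu.ne'), cpow_one, mul_right_comm, mul_assoc]
    exact (((hasDerivAt_id z).mul_const (u : ℂ)).cexp.const_mul _).congr_deriv (by simp [mul_comm])
  have h_bound : ∀ᵐ u : ℝ ∂volume.restrict (Ioi (0 : ℝ)), ∀ z ∈ Metric.ball z₀ (-b),
      ‖(u : ℂ) ^ (c + 1) * cexp (z * u)‖ ≤ u ^ (c.re + 1) * Real.exp (b * u) := by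
    filter_upwards [ae_restrict_mem measurableSet_Ioi] with u (hu : 0 < u) z hz
    rw [norm_cpow_mul_cexp_mul hu, add_re, one_re]
    gcongr
    exact (hre z hz).le
  exact (hasDerivAt_integral_of_dominated_loc_of_deriv_le (Metric.ball_mem_nhds z₀ (by linarith))
    (.of_forall fun z => (continuousOn_cpow_mul_cexp_mul c z).aestronglyMeasurable
      measurableSet_Ioi)
    (integrableOn_cpow_mul_cexp_mul_Ioi hc hz₀)
    ((continuousOn_cpow_mul_cexp_mul _ z₀).aestronglyMeasurable measurableSet_Ioi)
    h_bound (integrableOn_rpow_mul_exp_mul_Ioi (by linarith) hb) h_deriv).2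

lemma integral_cpow_mul_cexp_ofReal_mul_Ioi {a : ℂ} (ha : 0 < a.re) {x : ℝ} (hx : x < 0) :
    ∫ u in Ioi (0 : ℝ), (u : ℂ) ^ (a - 1) * cexp (x * u) = (-(x : ℂ)) ^ (-a) * Gamma a := by
  have hx' : 0 < -x := neg_pos.mpr hx
  have h := integral_cpow_mul_exp_neg_mul_Ioi ha hx'
  simp only [ofReal_neg, neg_mul, neg_neg] at h
  rw [h, one_div, ← ofReal_neg, inv_cpow_ofReal_nonneg hx'.le, cpow_neg]

lemma integral_cpow_mul_cexp_mul_Ioi {a z : ℂ} (ha : 0 < a.re) (hz : z.re < 0) :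
    ∫ u in Ioi (0 : ℝ), (u : ℂ) ^ (a - 1) * cexp (z * u) = (-z) ^ (-a) * Gamma a := by
  let U : Set ℂ := {z | z.re < 0}
  have hU : IsOpen U := isOpen_lt continuous_re continuous_const
  have hlhs : AnalyticOnNhd ℂ
      (fun z : ℂ => ∫ u in Ioi (0 : ℝ), (u : ℂ) ^ (a - 1) * cexp (z * u)) U :=
    DifferentiableOn.analyticOnNhd (fun z hz =>
      (hasDerivAt_integral_cpow_mul_cexp_mul_Ioi (by simpa using ha) hz).differentiableAt
        |>.differentiableWithinAt) hU
  have hrhs : AnalyticOnNhd ℂ (fun z : ℂ => (-z) ^ (-a) * Gamma a) U :=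
    DifferentiableOn.analyticOnNhd (fun z (hz : z.re < 0) =>
      ((differentiableAt_id.neg.cpow_const (Or.inl (by simpa using hz))).mul_const _)
        |>.differentiableWithinAt) hU
  have hreal : ∃ᶠ w in 𝓝[≠] (-1 : ℂ), (∫ u in Ioi (0 : ℝ), (u : ℂ) ^ (a - 1) * cexp (w * u))
      = (-w) ^ (-a) * Gamma a := by
    have hto : Tendsto ((↑) : ℝ → ℂ) (𝓝[<] (-1)) (𝓝[≠] (-1 : ℂ)) := by
      refine tendsto_nhdsWithin_of_tendsto_nhds_of_eventually_within _
        ((continuous_ofReal.tendsto' _ _ (by simp)).mono_left nhdsWithin_le_nhds) ?_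
      filter_upwards [self_mem_nhdsWithin] with x (hx : x < -1)
      simpa [← ofReal_one, ← ofReal_neg] using hx.ne
    refine hto.frequently (Eventually.frequently ?_)
    filter_upwards [self_mem_nhdsWithin] with x (hx : x < -1)
    exact integral_cpow_mul_cexp_ofReal_mul_Ioi ha (by linarith)
  exact hlhs.eqOn_of_preconnected_of_frequently_eq hrhs (convex_halfSpace_re_lt 0).isPreconnected
    (by simp [U]) hreal hz

theorem weyl_fracderiv_exp (α k : ℂ) (hα : α.re < 0) (hk : k.re < 0) (t : ℝ) :
    IntegrableOn
      (fun u : ℝ => (u : ℂ) ^ (-α - 1) * Complex.exp (k * ((t : ℂ) + (u : ℂ))))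
      (Set.Ioi 0) ∧
    (1 / Complex.Gamma (-α)) *
        ∫ u in Set.Ioi (0 : ℝ), (u : ℂ) ^ (-α - 1) * Complex.exp (k * ((t : ℂ) + (u : ℂ)))
      = (-k) ^ α * Complex.exp (k * (t : ℂ)) := by
  have ha : 0 < (-α).re := by simpa using hα
  have hshift : (fun u : ℝ => (u : ℂ) ^ (-α - 1) * cexp (k * (t + u)))
      = fun u : ℝ => cexp (k * t) * ((u : ℂ) ^ (-α - 1) * cexp (k * u)) := by
    ext u
    rw [mul_add, exp_add]
    ring
  rw [hshift]
  refine ⟨(integrableOn_cpow_mul_cexp_mul_Ioi (by simpa using hα) hk).const_mul _, ?_⟩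
  rw [integral_const_mul, integral_cpow_mul_cexp_mul_Ioi ha hk, neg_neg]
  field_simp [Gamma_ne_zero_of_re_pos ha]
end

section
/- Let α ∈ ℂ with −1 < Re(α) < 0, let b > 0 be real, and let t ∈ ℝ. Then the functions R ↦ (1/Γ(−α)) ∫_0^R u^(−α−1) e^(−ib(t+u)) du tend, as R → ∞, to (ib)^α e^(−ibt), where (ib)^α is defined by the principal branch of the complex power. -/
open MeasureTheory Set Filter Topology Complex

/-! For `0 < Re z` the Gamma integral `∫₀^∞ u^(s-1) e^(-zu) du = Γ(s) z^(-s)` is Mathlib's for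
real `z` and extends to the open right half-plane by analytic continuation in `z`. On its boundary
`z = i b` the integral converges only conditionally, but an integration by parts against `e^(-zu)`
bounds every piece `∫_R^M` by `C(s) R^(Re s - 1) / |z|`, uniformly in `0 ≤ Re z`, provided
`Re s < 1`. So `‖∫₀^R - Γ(s) z^(-s)‖ ≤ C(s) R^(Re s - 1) / |z|` on the open half-plane; this passes
to the boundary because `∫₀^R` is continuous in `z` up to it, and `R → ∞` gives the theorem with
`s = -α`. -/

lemma intervalIntegral_rpow_le_of_lt_neg_one {r R M : ℝ} (hr : r < -1) (hR : 0 < R) (hRM : R ≤ M) :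
    ∫ x in R..M, x ^ r ≤ R ^ (r + 1) / -(r + 1) := by
  have h0 : (0 : ℝ) ∉ uIcc R M := by
    rw [uIcc_of_le hRM]; exact fun h => hR.not_ge h.1
  rw [integral_rpow (Or.inr ⟨hr.ne, h0⟩), ← neg_div_neg_eq, neg_sub]
  gcongr
  · linarith
  · exact sub_le_self _ (Real.rpow_nonneg (hR.le.trans hRM) _)

section

variable {s z : ℂ}

lemma norm_cpow_mul_cexp_neg_mul {u : ℝ} (hu : 0 < u) (s z : ℂ) :
    ‖(u : ℂ) ^ (s - 1) * cexp (-(z * u))‖ = u ^ (s.re - 1) * Real.exp (-(z.re * u)) := by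
  rw [norm_mul, norm_cpow_eq_rpow_re_of_pos hu, norm_exp]
  simp

lemma norm_cpow_mul_cexp_neg_mul_le (hz : 0 ≤ z.re) {u : ℝ} (hu : 0 < u) :
    ‖(u : ℂ) ^ (s - 1) * cexp (-(z * u))‖ ≤ u ^ (s.re - 1) := by
  rw [norm_cpow_mul_cexp_neg_mul hu]
  exact mul_le_of_le_one_right (by positivity) (Real.exp_le_one_iff.2 (by nlinarith))

lemma continuousOn_cpow_mul_cexp_neg_mul (s z : ℂ) :
    ContinuousOn (fun u : ℝ => (u : ℂ) ^ (s - 1) * cexp (-(z * u))) (Ioi 0) := fun u hu =>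
  (((continuousAt_cpow_const (ofReal_mem_slitPlane.2 hu)).comp continuous_ofReal.continuousAt).mul
    (by fun_prop)).continuousWithinAt

lemma integrableOn_cpow_mul_cexp_neg_mul (hs : 0 < s.re) (hz : 0 < z.re) :
    IntegrableOn (fun u : ℝ => (u : ℂ) ^ (s - 1) * cexp (-(z * u))) (Ioi 0) := by
  have hbound : IntegrableOn (fun u : ℝ => u ^ (s.re - 1) * Real.exp (-(z.re * u))) (Ioi 0) := by
    simpa [Real.rpow_one] using
      integrableOn_rpow_mul_exp_neg_mul_rpow (s := s.re - 1) (by linarith) one_pos hz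
  refine hbound.mono' ((continuousOn_cpow_mul_cexp_neg_mul s z).aestronglyMeasurable
    measurableSet_Ioi) ?_
  filter_upwards [ae_restrict_mem measurableSet_Ioi] with u hu
  exact (norm_cpow_mul_cexp_neg_mul hu s z).le

lemma differentiableOn_integral_cpow_mul_cexp_neg_mul (hs : 0 < s.re) :
    DifferentiableOn ℂ (fun z => ∫ u in Ioi (0 : ℝ), (u : ℂ) ^ (s - 1) * cexp (-(z * u)))
      {z | 0 < z.re} := by
  intro z₀ hz₀
  set δ := z₀.re / 2 with hδ_def
  have hδ : 0 < δ := half_pos hz₀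
  refine (hasDerivAt_integral_of_dominated_loc_of_deriv_le (μ := volume.restrict (Ioi 0))
    (F' := fun z (u : ℝ) => -(u : ℂ) * ((u : ℂ) ^ (s - 1) * cexp (-(z * u))))
    (bound := fun u => u ^ s.re * Real.exp (-(δ * u))) (Metric.ball_mem_nhds z₀ hδ)
    (.of_forall fun z => (continuousOn_cpow_mul_cexp_neg_mul s z).aestronglyMeasurable
      measurableSet_Ioi) (integrableOn_cpow_mul_cexp_neg_mul hs hz₀)
    ((continuous_ofReal.continuousOn.neg.mul
      (continuousOn_cpow_mul_cexp_neg_mul s z₀)).aestronglyMeasurable measurableSet_Ioi)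
    ?_ ?_ ?_).2.differentiableAt.differentiableWithinAt
  · filter_upwards [ae_restrict_mem measurableSet_Ioi] with u (hu : 0 < u) z hz
    have hδz : δ ≤ z.re := by
      have := (abs_re_le_norm (z - z₀)).trans (mem_ball_iff_norm.1 hz).le
      rw [sub_re, abs_le] at this
      linarith
    rw [norm_mul, norm_neg, norm_real, Real.norm_of_nonneg hu.le, norm_cpow_mul_cexp_neg_mul hu,
      ← mul_assoc, ← Real.rpow_one_add' hu.le (by rw [add_sub_cancel]; exact hs.ne'),
      add_sub_cancel]
    gcongr
  · simpa [Real.rpow_one, IntegrableOn] using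
      integrableOn_rpow_mul_exp_neg_mul_rpow (p := 1) (s := s.re) (by linarith) one_pos hδ
  · filter_upwards with u z _
    have := (((hasDerivAt_id z).mul_const (u : ℂ)).neg.cexp).const_mul ((u : ℂ) ^ (s - 1))
    exact this.congr_deriv (by simp only [Pi.neg_apply, id]; ring)

theorem integral_cpow_mul_cexp_neg_mul_Ioi (hs : 0 < s.re) (hz : 0 < z.re) :
    ∫ u in Ioi (0 : ℝ), (u : ℂ) ^ (s - 1) * cexp (-(z * u)) = Gamma s * z ^ (-s) := by
  have hU : IsOpen {w : ℂ | 0 < w.re} := isOpen_lt continuous_const continuous_re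
  have hRHS : DifferentiableOn ℂ (fun w : ℂ => Gamma s * w ^ (-s)) {w | 0 < w.re} :=
    fun w hw => ((differentiableAt_id.cpow_const (Or.inl hw)).const_mul _).differentiableWithinAt
  have hreal : ∀ r : ℝ, 0 < r →
      ∫ u in Ioi (0 : ℝ), (u : ℂ) ^ (s - 1) * cexp (-(r * u)) = Gamma s * (r : ℂ) ^ (-s) := by
    intro r hr
    rw [integral_cpow_mul_exp_neg_mul_Ioi hs hr, mul_comm, one_div,
      inv_cpow _ _ (by simp [arg_ofReal_of_nonneg hr.le, Real.pi_ne_zero.symm]), cpow_neg]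
  have hofReal : Tendsto ((↑) : ℝ → ℂ) (𝓝[>] 1) (𝓝[≠] 1) :=
    tendsto_nhdsWithin_of_tendsto_nhds_of_eventually_within _
      ((continuous_ofReal.tendsto' 1 1 ofReal_one).mono_left nhdsWithin_le_nhds)
      (eventually_nhdsWithin_of_forall fun r (hr : r ∈ Ioi 1) => by simpa using hr.out.ne')
  exact ((differentiableOn_integral_cpow_mul_cexp_neg_mul hs).analyticOnNhd
    hU).eqOn_of_preconnected_of_frequently_eq (hRHS.analyticOnNhd hU)
    (convex_halfSpace_re_gt 0).isPreconnected (by simp)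
    (hofReal.frequently (eventually_nhdsWithin_of_forall fun r (hr : r ∈ Ioi 1) =>
      hreal r (zero_lt_one.trans hr)).frequently) hz

lemma norm_cpow_mul_neg_inv_mul_cexp_neg_mul_le (hz : 0 ≤ z.re) {u : ℝ} (hu : 0 < u) :
    ‖(u : ℂ) ^ (s - 1) * (-z⁻¹ * cexp (-(z * u)))‖ ≤ u ^ (s.re - 1) / ‖z‖ := by
  rw [mul_left_comm, norm_mul, norm_neg, norm_inv, inv_mul_eq_div]
  gcongr
  exact norm_cpow_mul_cexp_neg_mul_le hz hu

lemma intervalIntegral_cpow_mul_cexp_neg_mul_eq (hz₀ : z ≠ 0) {R M : ℝ} (hR : 0 < R)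
    (hRM : R ≤ M) :
    ∫ x in R..M, (x : ℂ) ^ (s - 1) * cexp (-(z * x)) =
      (M : ℂ) ^ (s - 1) * (-z⁻¹ * cexp (-(z * M))) - (R : ℂ) ^ (s - 1) * (-z⁻¹ * cexp (-(z * R)))
        - ∫ x in R..M, (s - 1) * ((x : ℂ) ^ (s - 1 - 1) * (-z⁻¹ * cexp (-(z * x)))) := by
  have hpos : ∀ x ∈ uIcc R M, 0 < x := fun x hx =>
    hR.trans_le (by rw [uIcc_of_le hRM] at hx; exact hx.1)
  have hu : ∀ x ∈ uIcc R M, HasDerivAt (fun x : ℝ => (x : ℂ) ^ (s - 1))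
      ((s - 1) * (x : ℂ) ^ (s - 1 - 1)) x := fun x hx =>
    (hasStrictDerivAt_cpow_const (ofReal_mem_slitPlane.2 (hpos x hx))).hasDerivAt.comp_ofReal
  have hv : ∀ x ∈ uIcc R M, HasDerivAt (fun x : ℝ => -z⁻¹ * cexp (-(z * x)))
      (cexp (-(z * x))) x := by
    intro x _
    have := ((((hasDerivAt_id (x : ℂ)).const_mul z).neg).cexp.const_mul (-z⁻¹)).comp_ofReal
    exact this.congr_deriv (by simp only [Pi.neg_apply, id, mul_one]; field_simp)
  have hu' : IntervalIntegrable (fun x : ℝ => (s - 1) * (x : ℂ) ^ (s - 1 - 1)) volume R M :=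
    ContinuousOn.intervalIntegrable fun x hx => (continuousAt_const.mul
      ((continuousAt_cpow_const (ofReal_mem_slitPlane.2 (hpos x hx))).comp
        continuous_ofReal.continuousAt)).continuousWithinAt
  have hv' : IntervalIntegrable (fun x : ℝ => cexp (-(z * x))) volume R M :=
    (by fun_prop : Continuous fun x : ℝ => cexp (-(z * x))).intervalIntegrable _ _
  simp_rw [intervalIntegral.integral_mul_deriv_eq_deriv_mul hu hv hu' hv', mul_assoc]

lemma norm_intervalIntegral_cpow_mul_cexp_neg_mul_le (hs : s.re < 1) (hz : 0 ≤ z.re)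
    (hz₀ : z ≠ 0) {R M : ℝ} (hR : 0 < R) (hRM : R ≤ M) :
    ‖∫ x in R..M, (x : ℂ) ^ (s - 1) * cexp (-(z * x))‖ ≤
      (2 + ‖s - 1‖ / (1 - s.re)) * R ^ (s.re - 1) / ‖z‖ := by
  have hboundary : ∀ x, R ≤ x →
      ‖(x : ℂ) ^ (s - 1) * (-z⁻¹ * cexp (-(z * x)))‖ ≤ R ^ (s.re - 1) / ‖z‖ := fun x hx =>
    (norm_cpow_mul_neg_inv_mul_cexp_neg_mul_le hz (hR.trans_le hx)).trans
      (div_le_div_of_nonneg_right (Real.rpow_le_rpow_of_nonpos hR hx (by linarith))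
        (norm_nonneg z))
  have hrest : ‖∫ x in R..M, (s - 1) * ((x : ℂ) ^ (s - 1 - 1) * (-z⁻¹ * cexp (-(z * x))))‖ ≤
      ‖s - 1‖ * (R ^ (s.re - 1) / (1 - s.re)) / ‖z‖ := by
    have hpointwise : ∀ x ∈ Ioc R M,
        ‖(s - 1) * ((x : ℂ) ^ (s - 1 - 1) * (-z⁻¹ * cexp (-(z * x))))‖ ≤
          ‖s - 1‖ / ‖z‖ * x ^ (s.re - 2) := fun x hx => by
      have hle : ‖(x : ℂ) ^ (s - 1 - 1) * (-z⁻¹ * cexp (-(z * x)))‖ ≤ x ^ (s.re - 2) / ‖z‖ :=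
        (norm_cpow_mul_neg_inv_mul_cexp_neg_mul_le hz (hR.trans hx.1)).trans_eq
          (by simp only [sub_re, one_re]; ring_nf)
      rw [norm_mul, div_mul_eq_mul_div, mul_div_assoc]
      gcongr
    have hrpow := intervalIntegral_rpow_le_of_lt_neg_one (r := s.re - 2) (by linarith) hR hRM
    rw [show s.re - 2 + 1 = s.re - 1 by ring, show -(s.re - 1) = 1 - s.re by ring] at hrpow
    calc _ ≤ ∫ x in R..M, ‖s - 1‖ / ‖z‖ * x ^ (s.re - 2) :=
          intervalIntegral.norm_integral_le_of_norm_le hRM (.of_forall hpointwise)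
            ((intervalIntegral.intervalIntegrable_rpow
              (Or.inr fun h => hR.not_ge (uIcc_of_le hRM ▸ h).1)).const_mul _)
      _ ≤ _ := by
          rw [intervalIntegral.integral_const_mul, div_mul_eq_mul_div]
          gcongr
  rw [intervalIntegral_cpow_mul_cexp_neg_mul_eq hz₀ hR hRM]
  calc _ ≤ R ^ (s.re - 1) / ‖z‖ + R ^ (s.re - 1) / ‖z‖ +
        ‖s - 1‖ * (R ^ (s.re - 1) / (1 - s.re)) / ‖z‖ :=
        (norm_sub_le _ _).trans (add_le_add ((norm_sub_le _ _).trans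
          (add_le_add (hboundary M hRM) (hboundary R le_rfl))) hrest)
    _ = _ := by field_simp; ring

lemma norm_integral_Ioi_cpow_mul_cexp_neg_mul_le (hs₀ : 0 < s.re) (hs : s.re < 1)
    (hz : 0 < z.re) {R : ℝ} (hR : 0 < R) :
    ‖∫ u in Ioi R, (u : ℂ) ^ (s - 1) * cexp (-(z * u))‖ ≤
      (2 + ‖s - 1‖ / (1 - s.re)) * R ^ (s.re - 1) / ‖z‖ :=
  le_of_tendsto (intervalIntegral_tendsto_integral_Ioi R
      ((integrableOn_cpow_mul_cexp_neg_mul hs₀ hz).mono_set (Ioi_subset_Ioi hR.le))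
      tendsto_id).norm
    ((eventually_ge_atTop R).mono fun _ hM =>
      norm_intervalIntegral_cpow_mul_cexp_neg_mul_le hs hz.le (ne_zero_of_re_pos hz) hR hM)

lemma norm_intervalIntegral_cpow_mul_cexp_neg_mul_sub_le_of_re_pos (hs₀ : 0 < s.re)
    (hs : s.re < 1) (hz : 0 < z.re) {R : ℝ} (hR : 0 < R) :
    ‖(∫ u in (0 : ℝ)..R, (u : ℂ) ^ (s - 1) * cexp (-(z * u))) - Gamma s * z ^ (-s)‖ ≤
      (2 + ‖s - 1‖ / (1 - s.re)) * R ^ (s.re - 1) / ‖z‖ := by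
  have hint := integrableOn_cpow_mul_cexp_neg_mul hs₀ hz
  have hsplit : (∫ u in (0 : ℝ)..R, (u : ℂ) ^ (s - 1) * cexp (-(z * u))) +
      ∫ u in Ioi R, (u : ℂ) ^ (s - 1) * cexp (-(z * u)) = Gamma s * z ^ (-s) := by
    rw [← integral_cpow_mul_cexp_neg_mul_Ioi hs₀ hz, intervalIntegral.integral_of_le hR.le,
      ← setIntegral_union (Ioc_disjoint_Ioi le_rfl) measurableSet_Ioi
        (hint.mono_set Ioc_subset_Ioi_self) (hint.mono_set (Ioi_subset_Ioi hR.le)),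
      Ioc_union_Ioi_eq_Ioi hR.le]
  rw [← hsplit, sub_add_cancel_left, norm_neg]
  exact norm_integral_Ioi_cpow_mul_cexp_neg_mul_le hs₀ hs hz hR

lemma continuousOn_intervalIntegral_cpow_mul_cexp_neg_mul (hs₀ : 0 < s.re) {R : ℝ}
    (hR : 0 ≤ R) :
    ContinuousOn (fun z => ∫ u in (0 : ℝ)..R, (u : ℂ) ^ (s - 1) * cexp (-(z * u)))
      {z | 0 ≤ z.re} := by
  intro z _
  refine intervalIntegral.continuousWithinAt_of_dominated_interval
    (bound := fun u => u ^ (s.re - 1)) (.of_forall fun w => ?_)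
    (eventually_nhdsWithin_of_forall fun w hw => .of_forall fun u hu => ?_)
    (intervalIntegral.intervalIntegrable_rpow' (by linarith))
    (.of_forall fun u _ => by fun_prop)
  · rw [uIoc_of_le hR]
    exact ((continuousOn_cpow_mul_cexp_neg_mul s w).mono
      Ioc_subset_Ioi_self).aestronglyMeasurable measurableSet_Ioc
  · rw [uIoc_of_le hR] at hu
    exact norm_cpow_mul_cexp_neg_mul_le hw hu.1

lemma norm_intervalIntegral_cpow_mul_cexp_neg_mul_sub_le (hs₀ : 0 < s.re) (hs : s.re < 1)
    (hz : 0 ≤ z.re) (hz₀ : z ≠ 0) {R : ℝ} (hR : 0 < R) :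
    ‖(∫ u in (0 : ℝ)..R, (u : ℂ) ^ (s - 1) * cexp (-(z * u))) - Gamma s * z ^ (-s)‖ ≤
      (2 + ‖s - 1‖ / (1 - s.re)) * R ^ (s.re - 1) / ‖z‖ := by
  -- approach `z` from the open half-plane along `z + ε`, `ε → 0+`
  have hshift : Tendsto (fun ε : ℝ => z + ε) (𝓝[>] 0) (𝓝[{w | 0 ≤ w.re}] z) := by
    refine tendsto_nhdsWithin_iff.2
      ⟨?_, eventually_nhdsWithin_of_forall fun ε (hε : 0 < ε) => ?_⟩
    · simpa using tendsto_const_nhds.add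
        ((continuous_ofReal.tendsto' 0 0 ofReal_zero).mono_left nhdsWithin_le_nhds)
    · show 0 ≤ (z + ε).re
      rw [add_re, ofReal_re]; linarith
  have hslit : z ∈ slitPlane := by
    rw [mem_slitPlane_iff]
    rcases hz.lt_or_eq with hz | hz
    · exact Or.inl hz
    · exact Or.inr fun him => hz₀ (ext hz.symm him)
  have hshift' := hshift.mono_right nhdsWithin_le_nhds
  have hlim := (((continuousOn_intervalIntegral_cpow_mul_cexp_neg_mul hs₀ hR.le) z
    hz).tendsto.comp hshift).sub
      (((continuousAt_cpow_const (b := -s) hslit).tendsto.const_mul (Gamma s)).comp hshift')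
  have hbound := (tendsto_const_nhds (x := (2 + ‖s - 1‖ / (1 - s.re)) * R ^ (s.re - 1))).div
    ((continuous_norm.tendsto z).comp hshift') (norm_ne_zero_iff.2 hz₀)
  refine le_of_tendsto_of_tendsto hlim.norm hbound
    (eventually_nhdsWithin_of_forall fun ε (hε : 0 < ε) => ?_)
  exact norm_intervalIntegral_cpow_mul_cexp_neg_mul_sub_le_of_re_pos hs₀ hs
    (by rw [add_re, ofReal_re]; linarith) hR

theorem tendsto_intervalIntegral_cpow_mul_cexp_neg_mul (hs₀ : 0 < s.re) (hs : s.re < 1)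
    (hz : 0 ≤ z.re) (hz₀ : z ≠ 0) :
    Tendsto (fun R : ℝ => ∫ u in (0 : ℝ)..R, (u : ℂ) ^ (s - 1) * cexp (-(z * u))) atTop
      (𝓝 (Gamma s * z ^ (-s))) := by
  rw [tendsto_iff_norm_sub_tendsto_zero]
  refine squeeze_zero' (.of_forall fun _ => norm_nonneg _) ((eventually_gt_atTop 0).mono
    fun R hR => norm_intervalIntegral_cpow_mul_cexp_neg_mul_sub_le hs₀ hs hz hz₀ hR) ?_
  have hdecay : Tendsto (fun R : ℝ => R ^ (s.re - 1)) atTop (𝓝 0) := by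
    simpa using tendsto_rpow_neg_atTop (y := 1 - s.re) (by linarith)
  simpa using (hdecay.const_mul (2 + ‖s - 1‖ / (1 - s.re))).div_const ‖z‖

end

theorem weyl_fracderiv_exp_boundary (α : ℂ) (hα1 : -1 < α.re) (hα2 : α.re < 0)
    (b : ℝ) (hb : 0 < b) (t : ℝ) :
    Filter.Tendsto
      (fun R : ℝ => (1 / Complex.Gamma (-α)) *
        ∫ u in (0 : ℝ)..R,
          (u : ℂ) ^ (-α - 1) * Complex.exp (-(Complex.I * (b : ℂ)) * ((t : ℂ) + (u : ℂ))))
      Filter.atTop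
      (nhds ((Complex.I * (b : ℂ)) ^ α * Complex.exp (-(Complex.I * (b : ℂ)) * (t : ℂ)))) := by
  have hs₀ : 0 < (-α).re := by rw [neg_re]; linarith
  have hs : (-α).re < 1 := by rw [neg_re]; linarith
  have hz₀ : I * (b : ℂ) ≠ 0 := mul_ne_zero I_ne_zero (ofReal_ne_zero.2 hb.ne')
  have hlim := ((tendsto_intervalIntegral_cpow_mul_cexp_neg_mul hs₀ hs (by simp) hz₀).mul_const
    (cexp (-(I * b) * t))).const_mul (1 / Gamma (-α))
  rw [neg_neg, ← mul_assoc, ← mul_assoc, one_div_mul_cancel (Gamma_ne_zero_of_re_pos hs₀),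
    one_mul] at hlim
  refine hlim.congr fun R => ?_
  rw [← intervalIntegral.integral_mul_const]
  congr 2 with u
  rw [mul_assoc, ← Complex.exp_add]
  ring_nf
end

section
/- Let x, s ∈ ℂ with Re(x) > 0, and let k ∈ ℕ. Then on the open upper half-plane {t ∈ ℂ : Im(t) > 0}, the function t ↦ L(t,x,s) is k times complex differentiable, and its k-th iterated derivative at any t with Im(t) > 0 equals (2πi)^k ∑_{n=0}^{k} C(k,n) (−x)^n L(t, x, s−k+n), where C(k,n) denotes the ordinary binomial coefficient. -/
open MeasureTheory

/-- The Lerch zeta function, defined by its (absolutely convergent, for `Im t > 0` and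
`Re x > 0`) series, with all complex powers taken with the principal branch. -/
noncomputable def lerchZeta (t x s : ℂ) : ℂ :=
  ∑' m : ℕ, ((m : ℂ) + x) ^ (-s) * Complex.exp (2 * Real.pi * Complex.I * t * m)

/-!
With `q = e^{2πit}`, `L(t, x, s) = ∑ (m + x)^{-s} q^m` is a `q`-series whose coefficients grow
polynomially in `m`. Such a series converges locally uniformly on the upper half-plane, so it is
holomorphic there and may be differentiated termwise, each derivative multiplying the `m`-th
coefficient by `2πim`. Writing `m = (m + x) - x` and expanding binomially,
`(2πim)^k (m + x)^{-s} = (2πi)^k ∑ C(k,n) (-x)^n (m + x)^{-(s-k+n)}`, and summing over `m` gives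
the formula.
-/

open Complex Asymptotics Filter Finset
open scoped Real

noncomputable def qSeries (a : ℕ → ℂ) (t : ℂ) : ℂ :=
  ∑' m : ℕ, a m * cexp (2 * π * I * t * m)

lemma norm_cexp_two_pi_I_mul_natCast (t : ℂ) (m : ℕ) :
    ‖cexp (2 * π * I * t * m)‖ = Real.exp (-(2 * π * t.im) * m) := by
  rw [norm_exp]
  congr 1
  simp [mul_re, mul_im]

lemma norm_qSeries_term_le (a : ℕ → ℂ) {c : ℝ} {z : ℂ} (hz : c ≤ z.im) (m : ℕ) :
    ‖a m * cexp (2 * π * I * z * m)‖ ≤ ‖a m‖ * Real.exp (-(2 * π * c) * m) := by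
  rw [norm_mul, norm_cexp_two_pi_I_mul_natCast]
  gcongr

section qSeries

variable {a : ℕ → ℂ} {K : ℕ}

lemma summable_norm_mul_exp_neg_of_isBigO (ha : a =O[atTop] fun m => (m : ℝ) ^ K) {c : ℝ}
    (hc : 0 < c) : Summable fun m : ℕ => ‖a m‖ * Real.exp (-c * m) :=
  summable_of_isBigO_nat (Real.summable_pow_mul_exp_neg_nat_mul K hc)
    (ha.norm_left.mul (isBigO_refl _ _))

lemma summable_qSeries_term (ha : a =O[atTop] fun m => (m : ℝ) ^ K) {t : ℂ} (ht : 0 < t.im) :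
    Summable fun m : ℕ => a m * cexp (2 * π * I * t * m) :=
  (summable_norm_mul_exp_neg_of_isBigO ha (by positivity)).of_norm_bounded
    (norm_qSeries_term_le a le_rfl)

lemma isBigO_two_pi_I_mul_natCast_mul (ha : a =O[atTop] fun m => (m : ℝ) ^ K) :
    (fun m : ℕ => 2 * π * I * m * a m) =O[atTop] fun m => (m : ℝ) ^ (K + 1) := by
  have h : (fun m : ℕ => 2 * π * I * (m : ℂ)) =O[atTop] fun m => (m : ℝ) :=
    isBigO_of_le' (c := 2 * π) _ fun m => by simp [abs_of_pos Real.pi_pos]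
  simpa [pow_succ'] using h.mul ha

lemma hasDerivAt_qSeries (ha : a =O[atTop] fun m => (m : ℝ) ^ K) {t : ℂ} (ht : 0 < t.im) :
    HasDerivAt (qSeries a) (qSeries (fun m => 2 * π * I * m * a m) t) t := by
  -- Weierstrass: the terms are dominated uniformly on the half-plane `U`, so the series
  -- can be differentiated termwise there.
  set U := {z : ℂ | t.im / 2 < z.im}
  have hU : IsOpen U := isOpen_lt continuous_const continuous_im
  have htU : t ∈ U := half_lt_self ht
  have hsum := summable_norm_mul_exp_neg_of_isBigO ha (by positivity : 0 < 2 * π * (t.im / 2))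
  have hle (m : ℕ) (z : ℂ) (hz : z ∈ U) := norm_qSeries_term_le a (le_of_lt hz) m
  have hterm (m : ℕ) (z : ℂ) : HasDerivAt (fun w => a m * cexp (2 * π * I * w * m))
      (2 * π * I * m * a m * cexp (2 * π * I * z * m)) z := by
    refine ((((hasDerivAt_id z).const_mul (2 * π * I)).mul_const (m : ℂ)).cexp.const_mul
      (a m)).congr_deriv ?_
    simp only [id, mul_one]
    ring
  have hdiffOn (m : ℕ) : DifferentiableOn ℂ (fun w => a m * cexp (2 * π * I * w * m)) U :=
    fun z _ => (hterm m z).differentiableAt.differentiableWithinAt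
  have hdiff : DifferentiableAt ℂ (qSeries a) t :=
    (differentiableOn_tsum_of_summable_norm hsum hdiffOn hU hle).differentiableAt
      (hU.mem_nhds htU)
  have hderiv := (hasSum_deriv_of_summable_norm hsum hdiffOn hU hle htU).tsum_eq
  simp only [(hterm _ t).deriv] at hderiv
  rw [qSeries, hderiv]
  exact hdiff.hasDerivAt

lemma differentiableOn_qSeries (ha : a =O[atTop] fun m => (m : ℝ) ^ K) :
    DifferentiableOn ℂ (qSeries a) {t : ℂ | 0 < t.im} :=
  fun _ ht => (hasDerivAt_qSeries ha ht).differentiableAt.differentiableWithinAt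

lemma iteratedDeriv_qSeries (ha : a =O[atTop] fun m => (m : ℝ) ^ K) (k : ℕ) {t : ℂ}
    (ht : 0 < t.im) :
    iteratedDeriv k (qSeries a) t = qSeries (fun m => (2 * π * I * m) ^ k * a m) t := by
  induction k generalizing a K t with
  | zero => simp
  | succ k ih =>
    have hderiv : deriv (qSeries a) =ᶠ[nhds t] qSeries fun m => 2 * π * I * m * a m :=
      (isOpen_lt continuous_const continuous_im).eventually_mem ht |>.mono
        fun z hz => (hasDerivAt_qSeries ha hz).deriv
    rw [iteratedDeriv_succ', hderiv.iteratedDeriv_eq, ih (isBigO_two_pi_I_mul_natCast_mul ha) ht]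
    simp only [pow_succ, mul_assoc]

end qSeries

lemma isBigO_natCast_add_cpow_neg (x s : ℂ) :
    (fun m : ℕ => ((m : ℂ) + x) ^ (-s)) =O[atTop] fun m => (m : ℝ) ^ ⌈-s.re⌉₊ := by
  have hcpow : (fun m : ℕ => ((m : ℂ) + x) ^ (-s)) =O[atTop] fun m => ‖(m : ℂ) + x‖ ^ (-s).re :=
    isBigO_cpow_rpow (isBoundedUnder_const (a := |(-s).im|))
  have hnorm : (fun m : ℕ => ‖(m : ℂ) + x‖) =Θ[atTop] fun m => (m : ℝ) := by
    have : (fun m : ℕ => (m : ℂ) + x) ~[atTop] fun m => (m : ℂ) :=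
      IsEquivalent.refl.add_const_of_norm_tendsto_atTop
        (by simpa [Function.comp_def] using tendsto_natCast_atTop_atTop)
    simpa using this.isTheta.norm_left.norm_right
  have hpow : (fun m : ℕ => (m : ℝ) ^ (-s).re) =O[atTop] fun m => (m : ℝ) ^ ⌈-s.re⌉₊ := by
    refine IsBigO.of_bound 1 ((eventually_ge_atTop 1).mono fun m hm => ?_)
    have hm : (1 : ℝ) ≤ m := by exact_mod_cast hm
    rw [one_mul, Real.norm_of_nonneg (by positivity), Real.norm_of_nonneg (by positivity),
      ← Real.rpow_natCast]
    exact Real.rpow_le_rpow_of_exponent_le hm (by simpa using Nat.le_ceil (-s.re))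
  exact hcpow.trans <| (hnorm.rpow (.of_forall fun _ => norm_nonneg _)
    (.of_forall fun _ => Nat.cast_nonneg _)).isBigO.trans hpow

lemma sub_pow_mul_cpow_neg {z : ℂ} (hz : z ≠ 0) (x s : ℂ) (k : ℕ) :
    (z - x) ^ k * z ^ (-s) =
      ∑ n ∈ range (k + 1), (k.choose n : ℂ) * (-x) ^ n * z ^ (-(s - k + n)) := by
  rw [sub_eq_neg_add, add_pow, sum_mul]
  refine sum_congr rfl fun n hn => ?_
  have hnk : n ≤ k := Nat.lt_succ_iff.mp (mem_range.mp hn)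
  rw [show -(s - k + n) = ((k - n : ℕ) : ℂ) + -s by push_cast [hnk]; ring, cpow_add _ _ hz,
    cpow_natCast]
  ring

lemma natCast_add_ne_zero_of_re_pos {x : ℂ} (hx : 0 < x.re) (m : ℕ) : (m : ℂ) + x ≠ 0 :=
  ne_of_apply_ne re (by simp only [add_re, natCast_re, zero_re]; positivity)

lemma lerchZeta_eq_qSeries (x s : ℂ) :
    (fun t => lerchZeta t x s) = qSeries fun m => ((m : ℂ) + x) ^ (-s) := rfl

lemma qSeries_two_pi_I_mul_pow_mul_cpow_neg {x : ℂ} (hx : 0 < x.re) (s : ℂ) (k : ℕ) {t : ℂ}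
    (ht : 0 < t.im) :
    qSeries (fun m => (2 * π * I * m) ^ k * ((m : ℂ) + x) ^ (-s)) t =
      (2 * π * I) ^ k *
        ∑ n ∈ range (k + 1), (k.choose n : ℂ) * (-x) ^ n * lerchZeta t x (s - k + n) := by
  have hterm (m : ℕ) : (2 * π * I * m) ^ k * ((m : ℂ) + x) ^ (-s) * cexp (2 * π * I * t * m) =
      (2 * π * I) ^ k * ∑ n ∈ range (k + 1), (k.choose n : ℂ) * (-x) ^ n *
        (((m : ℂ) + x) ^ (-(s - k + n)) * cexp (2 * π * I * t * m)) := by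
    have h := sub_pow_mul_cpow_neg (natCast_add_ne_zero_of_re_pos hx m) x s k
    rw [add_sub_cancel_right] at h
    simp only [mul_pow, mul_assoc, h, sum_mul]
  have hsum (n : ℕ) := summable_qSeries_term (isBigO_natCast_add_cpow_neg x (s - k + n)) ht
  simp only [qSeries, hterm, tsum_mul_left, lerchZeta]
  rw [Summable.tsum_finsetSum fun n _ => (hsum n).mul_left _]
  simp only [tsum_mul_left]

theorem iteratedDeriv_lerch_t (x s : ℂ) (hx : 0 < x.re) (k : ℕ) :
    ContDiffOn ℂ k (fun t : ℂ => lerchZeta t x s) {t : ℂ | 0 < t.im} ∧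
    ∀ t : ℂ, 0 < t.im →
      iteratedDeriv k (fun t : ℂ => lerchZeta t x s) t
        = (2 * Real.pi * Complex.I) ^ k *
          ∑ n ∈ Finset.range (k + 1),
            (k.choose n : ℂ) * (-x) ^ n * lerchZeta t x (s - k + n) := by
  have ha := isBigO_natCast_add_cpow_neg x s
  rw [lerchZeta_eq_qSeries]
  refine ⟨(differentiableOn_qSeries ha).contDiffOn (isOpen_lt continuous_const continuous_im),
    fun t ht => ?_⟩
  rw [iteratedDeriv_qSeries ha k ht, qSeries_two_pi_I_mul_pow_mul_cpow_neg hx s k ht]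
end

section
/- Let t, s ∈ ℂ with Im(t) > 0. Then on the open right half-plane {x ∈ ℂ : Re(x) > 0}, the function x ↦ L(t,x,s) is complex differentiable, and its derivative at any x with Re(x) > 0 equals −s · L(t, x, s+1). -/
open MeasureTheory

/-!
Term-by-term differentiation. If `ε ≤ Re y` and `‖y‖ ≤ R`, then
`‖(n + y) ^ w‖ ≤ e^{π |Im w|} (ε ^ Re w + (n + R) ^ Re w)` grows only polynomially in `n`, while
`‖e^{2πitn}‖ = ‖e^{2πit}‖ ^ n` decays geometrically because `Im t > 0`. So on a ball around `x`
in the right half-plane the differentiated terms `-s (n + y) ^ (-s-1) e^{2πitn}` have a uniform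
summable majorant, and the series may be differentiated term by term.
-/

open Complex Real Finset

theorem norm_cpow_le_rpow_mul_exp (z w : ℂ) : ‖z ^ w‖ ≤ ‖z‖ ^ w.re * Real.exp (π * |w.im|) := by
  refine (norm_cpow_le z w).trans ?_
  rw [div_eq_mul_inv, ← Real.exp_neg]
  gcongr
  calc -(arg z * w.im) ≤ |arg z * w.im| := neg_le_abs _
    _ = |arg z| * |w.im| := abs_mul _ _
    _ ≤ π * |w.im| := by gcongr; exact abs_arg_le_pi z

theorem rpow_le_rpow_add_rpow_of_le_of_le {ε ρ M : ℝ} (a : ℝ) (hε : 0 < ε) (hερ : ε ≤ ρ)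
    (hρM : ρ ≤ M) : ρ ^ a ≤ ε ^ a + M ^ a := by
  have hε' := Real.rpow_nonneg hε.le a
  have hM := Real.rpow_nonneg (hε.le.trans (hερ.trans hρM)) a
  rcases le_total 0 a with ha | ha
  · linarith [Real.rpow_le_rpow (hε.le.trans hερ) hρM ha]
  · linarith [Real.rpow_le_rpow_of_nonpos hε hερ ha]

theorem summable_add_pow_mul_geometric (k : ℕ) (c : ℝ) {r : ℝ} (hr : ‖r‖ < 1) :
    Summable fun n : ℕ => ((n : ℝ) + c) ^ k * r ^ n := by
  have hterm (j : ℕ) : Summable fun n : ℕ => c ^ (k - j) * k.choose j * ((n : ℝ) ^ j * r ^ n) :=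
    (summable_pow_mul_geometric_of_norm_lt_one (R := ℝ) j hr).mul_left _
  refine (summable_sum (s := range (k + 1)) fun j _ => hterm j).congr fun n => ?_
  rw [add_pow, sum_mul]
  exact sum_congr rfl fun j _ => by ring

theorem summable_add_rpow_mul_geometric (a : ℝ) {c r : ℝ} (hc : 1 ≤ c) (hr₀ : 0 ≤ r)
    (hr₁ : r < 1) : Summable fun n : ℕ => ((n : ℝ) + c) ^ a * r ^ n := by
  have hr : ‖r‖ < 1 := by rwa [Real.norm_of_nonneg hr₀]
  refine (summable_add_pow_mul_geometric ⌈a⌉₊ c hr).of_nonneg_of_le (fun n => by positivity)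
    fun n => ?_
  refine mul_le_mul_of_nonneg_right ?_ (pow_nonneg hr₀ n)
  rw [← Real.rpow_natCast]
  exact Real.rpow_le_rpow_of_exponent_le (by linarith [n.cast_nonneg (α := ℝ)]) (Nat.le_ceil a)

theorem norm_exp_two_pi_I_mul_lt_one {t : ℂ} (ht : 0 < t.im) :
    ‖exp (2 * π * I * t)‖ < 1 := by
  rw [norm_exp, Real.exp_lt_one_iff]
  simp only [mul_re, re_ofNat, ofReal_re, im_ofNat, ofReal_im, mul_zero, sub_zero, I_re, mul_im,
    zero_mul, add_zero, I_im, mul_one, sub_self, zero_sub, Left.neg_neg_iff]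
  positivity

noncomputable def lerchTerm (t w : ℂ) (n : ℕ) (y : ℂ) : ℂ :=
  ((n : ℂ) + y) ^ w * exp (2 * π * I * t * n)

theorem lerchZeta_eq_tsum_lerchTerm (t x s : ℂ) :
    lerchZeta t x s = ∑' n, lerchTerm t (-s) n x := rfl

theorem hasDerivAt_lerchTerm (t w : ℂ) (n : ℕ) {y : ℂ} (hy : 0 < y.re) :
    HasDerivAt (lerchTerm t w n) (w * lerchTerm t (w - 1) n y) y := by
  have hslit : (n : ℂ) + y ∈ slitPlane := by
    refine mem_slitPlane_iff.2 (Or.inl ?_)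
    simp only [add_re, natCast_re]
    positivity
  have := (((hasDerivAt_id y).const_add (n : ℂ)).cpow_const (c := w) hslit).mul_const
    (exp (2 * π * I * t * n))
  unfold lerchTerm
  simpa [mul_assoc] using this

theorem exists_summable_bound_lerchTerm (t w : ℂ) (ht : 0 < t.im) {ε : ℝ} (hε : 0 < ε)
    (R : ℝ) :
    ∃ u : ℕ → ℝ, Summable u ∧
      ∀ n y, ε ≤ y.re → ‖y‖ ≤ R → ‖lerchTerm t w n y‖ ≤ u n := by
  set q := ‖exp (2 * π * I * t)‖
  refine ⟨fun n => Real.exp (π * |w.im|) * (ε ^ w.re + ((n : ℝ) + (|R| + 1)) ^ w.re) * q ^ n,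
    ?_, fun n y hre hR => ?_⟩
  · have hq := norm_exp_two_pi_I_mul_lt_one ht
    have hc : 1 ≤ |R| + 1 := by linarith [abs_nonneg R]
    have hsum := ((summable_geometric_of_lt_one (norm_nonneg _) hq).mul_left (ε ^ w.re)).add
      (summable_add_rpow_mul_geometric w.re hc (norm_nonneg _) hq)
    exact (hsum.mul_left (Real.exp (π * |w.im|))).congr fun n => by ring
  · have hre' : ε ≤ ‖(n : ℂ) + y‖ := by
      refine le_trans ?_ (re_le_norm _)
      simp only [add_re, natCast_re]
      linarith [n.cast_nonneg (α := ℝ)]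
    have hnorm : ‖(n : ℂ) + y‖ ≤ n + (|R| + 1) := by
      refine (norm_add_le _ _).trans ?_
      simp only [Complex.norm_natCast]
      linarith [le_abs_self R]
    have hexp : exp (2 * π * I * t * n) = exp (2 * π * I * t) ^ n := by
      rw [← Complex.exp_nat_mul]; ring_nf
    rw [lerchTerm, norm_mul, hexp, norm_pow]
    refine mul_le_mul_of_nonneg_right ?_ (by positivity)
    calc ‖((n : ℂ) + y) ^ w‖ ≤ ‖(n : ℂ) + y‖ ^ w.re * Real.exp (π * |w.im|) :=
          norm_cpow_le_rpow_mul_exp _ _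
      _ ≤ _ := by
        rw [mul_comm]
        gcongr
        exact rpow_le_rpow_add_rpow_of_le_of_le _ hε hre' hnorm

theorem deriv_lerch_x (t s : ℂ) (ht : 0 < t.im) :
    ∀ x : ℂ, 0 < x.re →
      HasDerivAt (fun y : ℂ => lerchZeta t y s) (-s * lerchZeta t x (s + 1)) x := by
  intro x hx
  set ε := x.re / 2 with hε_def
  have hε : 0 < ε := half_pos hx
  have hball (y : ℂ) (hy : y ∈ Metric.ball x ε) : ε ≤ y.re ∧ ‖y‖ ≤ ‖x‖ + ε := by
    have hre := (abs_re_le_norm (y - x)).trans (mem_ball_iff_norm.1 hy).le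
    rw [sub_re, abs_le] at hre
    exact ⟨by linarith, norm_le_of_mem_closedBall (Metric.ball_subset_closedBall hy)⟩
  obtain ⟨u, hu, hu_bound⟩ := exists_summable_bound_lerchTerm t (-s - 1) ht hε (‖x‖ + ε)
  obtain ⟨v, hv, hv_bound⟩ := exists_summable_bound_lerchTerm t (-s) ht hx ‖x‖
  have hderiv (n : ℕ) (y : ℂ) (hy : y ∈ Metric.ball x ε) :
      HasDerivAt (lerchTerm t (-s) n) (-s * lerchTerm t (-s - 1) n y) y :=
    hasDerivAt_lerchTerm t (-s) n (hε.trans_le (hball y hy).1)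
  have hderiv_bound (n : ℕ) (y : ℂ) (hy : y ∈ Metric.ball x ε) :
      ‖-s * lerchTerm t (-s - 1) n y‖ ≤ ‖s‖ * u n := by
    rw [norm_mul, norm_neg]
    exact mul_le_mul_of_nonneg_left (hu_bound n y (hball y hy).1 (hball y hy).2) (norm_nonneg s)
  have hsummable : Summable fun n => lerchTerm t (-s) n x :=
    .of_norm_bounded hv fun n => hv_bound n x le_rfl le_rfl
  have hsum := hasDerivAt_tsum_of_isPreconnected (hu.mul_left ‖s‖) Metric.isOpen_ball
    (convex_ball x ε).isPreconnected hderiv hderiv_bound (Metric.mem_ball_self hε) hsummable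
    (Metric.mem_ball_self hε)
  simpa only [lerchZeta_eq_tsum_lerchTerm, tsum_mul_left, neg_add'] using hsum
end

section
/- Let t, s ∈ ℂ with Im(t) > 0, and let k ∈ ℕ. Then the k-th iterated complex derivative of the function x ↦ L(t,x,s) at any x with Re(x) > 0 equals (∏_{j=0}^{k−1} (−(s+j))) · L(t, x, s+k); the coefficient ∏_{j=0}^{k−1} (−(s+j)) = (−s)(−s−1)⋯(−s−k+1) equals Γ(1−s)/Γ(1−s−k) whenever the latter quotient is defined. -/
open MeasureTheory

/-!
Each term `(m + x)^(-s) e^(2πitm)` is holomorphic on `Re x > 0` with derivative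
`-s (m + x)^(-s-1) e^(2πitm)`. On the ball of radius `Re x / 2` about `x` the terms are bounded
by a polynomial in `m` times `e^(-2π m Im t)`, so the series can be differentiated termwise
(Weierstrass), and induction on `k` gives the formula. The coefficient is the falling factorial
`(-s)(-s-1)⋯(-s-k+1)`, i.e. the rising factorial `(1-s-k)(2-s-k)⋯(-s)`, which is
`Γ(1-s)/Γ(1-s-k)` by the functional equation of `Γ`.
-/

theorem Real.rpow_le_rpow_add_rpow {a b r : ℝ} (p : ℝ) (ha : 0 < a) (har : a ≤ r)
    (hrb : r ≤ b) : r ^ p ≤ a ^ p + b ^ p := by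
  have hr : 0 < r := ha.trans_le har
  rcases le_total p 0 with hp | hp
  · linarith [rpow_le_rpow_of_nonpos ha har hp, rpow_nonneg (hr.le.trans hrb) p]
  · linarith [rpow_le_rpow hr.le hrb hp, rpow_nonneg ha.le p]

theorem summable_rpow_add_mul_geometric (p : ℝ) {B r : ℝ} (hB : 1 ≤ B) (hr0 : 0 ≤ r)
    (hr1 : r < 1) : Summable fun m : ℕ => ((m : ℝ) + B) ^ p * r ^ m := by
  obtain ⟨n, hn⟩ := exists_nat_ge p
  have hpoly : Summable fun m : ℕ => ((m : ℝ) + B) ^ n * r ^ m := by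
    have hr : ‖r‖ < 1 := by rwa [Real.norm_of_nonneg hr0]
    simp_rw [add_pow, Finset.sum_mul]
    refine summable_sum fun i _ => ?_
    exact ((summable_pow_mul_geometric_of_norm_lt_one i hr).mul_right
      (B ^ (n - i) * (n.choose i))).congr fun m => by ring
  refine hpoly.of_nonneg_of_le (fun m => by positivity) fun m => ?_
  have hbase : 1 ≤ (m : ℝ) + B := by linarith [m.cast_nonneg (α := ℝ)]
  gcongr
  rw [← Real.rpow_natCast]
  exact Real.rpow_le_rpow_of_exponent_le hbase hn

namespace Complex

theorem norm_cpow_le_of_le_norm_of_norm_le {z w : ℂ} {a b : ℝ} (ha : 0 < a)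
    (haz : a ≤ ‖z‖) (hzb : ‖z‖ ≤ b) :
    ‖z ^ w‖ ≤ (a ^ w.re + b ^ w.re) * Real.exp (Real.pi * |w.im|) := by
  have harg : -(z.arg * w.im) ≤ Real.pi * |w.im| := calc
    -(z.arg * w.im) ≤ |z.arg| * |w.im| := by rw [← abs_mul]; exact neg_le_abs _
    _ ≤ Real.pi * |w.im| := by gcongr; exact abs_arg_le_pi z
  calc ‖z ^ w‖ ≤ ‖z‖ ^ w.re / Real.exp (z.arg * w.im) := norm_cpow_le z w
    _ = ‖z‖ ^ w.re * Real.exp (-(z.arg * w.im)) := by rw [Real.exp_neg, div_eq_mul_inv]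
    _ ≤ (a ^ w.re + b ^ w.re) * Real.exp (Real.pi * |w.im|) := by
      gcongr
      · exact add_nonneg (Real.rpow_nonneg ha.le _)
          (Real.rpow_nonneg (ha.le.trans (haz.trans hzb)) _)
      · exact Real.rpow_le_rpow_add_rpow _ ha haz hzb

theorem norm_exp_two_pi_I_mul_nat (t : ℂ) (m : ℕ) :
    ‖exp (2 * Real.pi * I * t * m)‖ = Real.exp (-(2 * Real.pi * t.im)) ^ m := by
  rw [norm_exp, ← Real.exp_nat_mul]
  congr 1
  simp [mul_re, mul_im, mul_comm, mul_left_comm]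

theorem hasDerivAt_const_add_cpow {c y : ℂ} (s : ℂ) (h : c + y ∈ slitPlane) :
    HasDerivAt (fun z => (c + z) ^ s) (s * (c + y) ^ (s - 1)) y := by
  simpa using ((hasDerivAt_id y).const_add c).cpow_const h

theorem half_re_lt_re_of_mem_ball {x y : ℂ} (hy : y ∈ Metric.ball x (x.re / 2)) :
    x.re / 2 < y.re := by
  have := (abs_re_le_norm (y - x)).trans_lt (mem_ball_iff_norm.1 hy)
  rw [sub_re, abs_lt] at this
  linarith

end Complex

open Complex

theorem exists_summable_bound_lerch_term_on_ball (s : ℂ) {t x : ℂ} (ht : 0 < t.im)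
    (hx : 0 < x.re) :
    ∃ u : ℕ → ℝ, Summable u ∧ ∀ (m : ℕ), ∀ y ∈ Metric.ball x (x.re / 2),
      ‖((m : ℂ) + y) ^ (-s) * exp (2 * Real.pi * I * t * m)‖ ≤ u m := by
  set r := Real.exp (-(2 * Real.pi * t.im))
  refine ⟨fun m => ((x.re / 2) ^ (-s).re + ((m : ℝ) + (2 * ‖x‖ + 1)) ^ (-s).re)
    * Real.exp (Real.pi * |(-s).im|) * r ^ m, ?_, fun m y hy => ?_⟩
  · have hr : r < 1 := Real.exp_lt_one_iff.2 (neg_neg_of_pos (by positivity))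
    have hB : (1 : ℝ) ≤ 2 * ‖x‖ + 1 := by linarith [norm_nonneg x]
    refine (((summable_geometric_of_lt_one (by positivity) hr).mul_left ((x.re / 2) ^ (-s).re)).add
      (summable_rpow_add_mul_geometric (-s).re hB (by positivity) hr)).mul_left
      (Real.exp (Real.pi * |(-s).im|)) |>.congr fun m => by ring
  have hre : x.re / 2 ≤ ‖(m : ℂ) + y‖ := calc
    x.re / 2 ≤ ((m : ℂ) + y).re := by
      simp only [add_re, natCast_re]
      linarith [half_re_lt_re_of_mem_ball hy, m.cast_nonneg (α := ℝ)]
    _ ≤ ‖(m : ℂ) + y‖ := re_le_norm _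
  have hnorm : ‖(m : ℂ) + y‖ ≤ m + (2 * ‖x‖ + 1) := calc
    ‖(m : ℂ) + y‖ ≤ m + (‖x‖ + ‖y - x‖) := by
      rw [← norm_natCast m]
      exact (norm_add_le _ _).trans (by gcongr; exact norm_le_norm_add_norm_sub' y x)
    _ ≤ m + (2 * ‖x‖ + 1) := by
      linarith [mem_ball_iff_norm.1 hy, abs_re_le_norm x, le_abs_self x.re]
  rw [norm_mul, norm_exp_two_pi_I_mul_nat]
  exact mul_le_mul_of_nonneg_right (norm_cpow_le_of_le_norm_of_norm_le (by positivity) hre hnorm)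
    (by positivity)

theorem deriv_lerchZeta (s : ℂ) {t x : ℂ} (ht : 0 < t.im) (hx : 0 < x.re) :
    deriv (fun y => lerchZeta t y s) x = -s * lerchZeta t x (s + 1) := by
  obtain ⟨u, hu, hbound⟩ := exists_summable_bound_lerch_term_on_ball s ht hx
  have hterm : ∀ (m : ℕ), ∀ y ∈ Metric.ball x (x.re / 2), HasDerivAt
      (fun z => ((m : ℂ) + z) ^ (-s) * exp (2 * Real.pi * I * t * m))
      (-s * ((m : ℂ) + y) ^ (-(s + 1)) * exp (2 * Real.pi * I * t * m)) y := fun m y hy => by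
    have hslit : (m : ℂ) + y ∈ slitPlane := mem_slitPlane_iff.2 <| Or.inl <| by
      simp only [add_re, natCast_re]
      linarith [half_re_lt_re_of_mem_ball hy, m.cast_nonneg (α := ℝ)]
    rw [neg_add']
    exact (hasDerivAt_const_add_cpow (-s) hslit).mul_const _
  have hxU : x ∈ Metric.ball x (x.re / 2) := Metric.mem_ball_self (by positivity)
  have hderiv := hasSum_deriv_of_summable_norm hu
    (fun m y hy => (hterm m y hy).differentiableAt.differentiableWithinAt) Metric.isOpen_ball
    hbound hxU
  unfold lerchZeta
  rw [← hderiv.tsum_eq, ← tsum_mul_left]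
  exact tsum_congr fun m => by rw [(hterm m x hxU).deriv, mul_assoc]

theorem iteratedDeriv_lerchZeta (s : ℂ) {t : ℂ} (ht : 0 < t.im) (k : ℕ) {x : ℂ}
    (hx : 0 < x.re) :
    iteratedDeriv k (fun y => lerchZeta t y s) x
      = (∏ j ∈ Finset.range k, -(s + j)) * lerchZeta t x (s + k) := by
  induction k generalizing x with
  | zero => simp
  | succ k ih =>
    have hloc : iteratedDeriv k (fun y => lerchZeta t y s)
        =ᶠ[nhds x] fun y => (∏ j ∈ Finset.range k, -(s + j)) * lerchZeta t y (s + k) :=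
      Filter.eventually_of_mem ((isOpen_lt continuous_const continuous_re).mem_nhds hx)
        fun y hy => ih hy
    rw [iteratedDeriv_succ, hloc.deriv_eq, deriv_const_mul_field,
      deriv_lerchZeta _ ht hx, Finset.prod_range_succ, Nat.cast_succ, add_assoc]
    ring

theorem prod_range_neg_add_eq_Gamma_div (s : ℂ) (k : ℕ) (h : Gamma (1 - s - k) ≠ 0) :
    ∏ j ∈ Finset.range k, -(s + j) = Gamma (1 - s) / Gamma (1 - s - k) := by
  have hpoles : ∀ n : ℕ, 1 - s - k ≠ -n := fun n hn => h ((Gamma_eq_zero_iff _).2 ⟨n, hn⟩)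
  have hratio := Gamma_add_nat_div_Gamma_eq (n := k) (1 - s - k) hpoles
  rw [sub_add_cancel] at hratio
  rw [hratio, show 1 - s - k = -s - k + 1 by ring, ← descPochhammer_eval_eq_ascPochhammer,
    descPochhammer_eval_eq_prod_range]
  exact Finset.prod_congr rfl fun j _ => by ring

theorem iteratedDeriv_lerch_x (t s : ℂ) (ht : 0 < t.im) (k : ℕ) :
    (∀ x : ℂ, 0 < x.re →
      iteratedDeriv k (fun y : ℂ => lerchZeta t y s) x
        = (∏ j ∈ Finset.range k, -(s + j)) * lerchZeta t x (s + k)) ∧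
    (Complex.Gamma (1 - s - k) ≠ 0 →
      (∏ j ∈ Finset.range k, -(s + j))
        = Complex.Gamma (1 - s) / Complex.Gamma (1 - s - k)) :=
  ⟨fun _ hx => iteratedDeriv_lerchZeta s ht k hx, prod_range_neg_add_eq_Gamma_div s k⟩
end

section
/- Let t, x, s, α ∈ ℂ with Im(t) > 0, Re(x) > 0, Re(α) < 0, and Re(s+α) > 0. Then the function u ↦ u^(−α−1) L(t, x+u, s) is integrable on (0, ∞), and (1/Γ(−α)) ∫_0^∞ u^(−α−1) L(t, x+u, s) du = (Γ(s+α)/Γ(s)) · L(t, x, s+α). -/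
/-!
Each term of the Lerch series contributes a beta integral: for `Re c > 0`,
`∫₀^∞ u^(a-1) (c+u)^(-s) du = Γ(a) Γ(s-a) / Γ(s) · c^(a-s)`, obtained by writing
`Γ(s) (c+u)^(-s) = ∫₀^∞ y^(s-1) e^(-(c+u) y) dy` and exchanging the two integrations.
The Gamma integral with complex rate used here follows from the real-rate case by analytic
continuation in the rate. The sum over `m` and the integral over `u` may be interchanged because
the `m`-th term is bounded by `e^(-2π m Im t)` times one integrable function of `u`.
Taking `a = -α` gives the theorem.
-/

open MeasureTheory

open Set Filter Topology Complex
open scoped Real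

theorem Real.integrableOn_rpow_mul_exp_neg_mul {a r : ℝ} (ha : 0 < a) (hr : 0 < r) :
    IntegrableOn (fun t : ℝ => t ^ (a - 1) * Real.exp (-(r * t))) (Ioi 0) := by
  simpa using integrableOn_rpow_mul_exp_neg_mul_rpow (p := 1) (s := a - 1) (by linarith) one_pos hr

lemma norm_cpow_mul_exp_neg_mul (a c : ℂ) {t : ℝ} (ht : 0 < t) :
    ‖(t : ℂ) ^ (a - 1) * exp (-(c * t))‖ = t ^ (a.re - 1) * Real.exp (-(c.re * t)) := by
  simp [norm_exp, norm_cpow_eq_rpow_re_of_pos ht]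

lemma continuousOn_cpow_mul_exp_neg_mul (a c : ℂ) :
    ContinuousOn (fun t : ℝ => (t : ℂ) ^ (a - 1) * exp (-(c * t))) (Ioi 0) := by
  refine ContinuousOn.mul ?_ (by fun_prop)
  exact continuous_ofReal.continuousOn.cpow continuousOn_const fun t ht => ofReal_mem_slitPlane.2 ht

lemma integrableOn_cpow_mul_exp_neg_mul {a c : ℂ} (ha : 0 < a.re) (hc : 0 < c.re) :
    IntegrableOn (fun t : ℝ => (t : ℂ) ^ (a - 1) * exp (-(c * t))) (Ioi 0) := by
  refine (Real.integrableOn_rpow_mul_exp_neg_mul ha hc).mono'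
    ((continuousOn_cpow_mul_exp_neg_mul a c).aestronglyMeasurable measurableSet_Ioi) ?_
  filter_upwards [ae_restrict_mem measurableSet_Ioi] with t ht
  rw [norm_cpow_mul_exp_neg_mul a c ht]

lemma differentiableOn_integral_cpow_mul_exp_neg_mul {a : ℂ} (ha : 0 < a.re) :
    DifferentiableOn ℂ (fun c : ℂ => ∫ t in Ioi (0 : ℝ), (t : ℂ) ^ (a - 1) * exp (-(c * t)))
      {c | 0 < c.re} := by
  intro c₀ hc₀
  set ε := c₀.re / 2
  have hε : 0 < ε := half_pos hc₀
  have hnhds : {c : ℂ | ε < c.re} ∈ 𝓝 c₀ :=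
    (isOpen_lt continuous_const continuous_re).mem_nhds (half_lt_self hc₀ : ε < c₀.re)
  refine (hasDerivAt_integral_of_dominated_loc_of_deriv_le hnhds
    -- the exponent `a + 1 - 1` puts the derivative in the shape of `norm_cpow_mul_exp_neg_mul`
    (F' := fun c (t : ℝ) => -((t : ℂ) ^ (a + 1 - 1) * exp (-(c * t))))
    (bound := fun t => t ^ ((a + 1).re - 1) * Real.exp (-(ε * t)))
    (Eventually.of_forall fun c => (continuousOn_cpow_mul_exp_neg_mul a c).aestronglyMeasurable
      measurableSet_Ioi) (integrableOn_cpow_mul_exp_neg_mul ha hc₀)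
    ((continuousOn_cpow_mul_exp_neg_mul _ c₀).neg.aestronglyMeasurable measurableSet_Ioi)
    ?_ (Real.integrableOn_rpow_mul_exp_neg_mul (by rw [add_re, one_re]; linarith) hε)
    ?_).2.differentiableAt.differentiableWithinAt
  · filter_upwards [ae_restrict_mem measurableSet_Ioi] with t (ht : 0 < t) c (hc : ε < c.re)
    rw [norm_neg, norm_cpow_mul_exp_neg_mul _ c ht]
    gcongr
  · filter_upwards [ae_restrict_mem measurableSet_Ioi] with t (ht : 0 < t) c _
    have hexp : HasDerivAt (fun c : ℂ => exp (-(c * t))) (exp (-(c * t)) * -t) c := by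
      simpa using ((hasDerivAt_id c).mul_const (t : ℂ)).neg.cexp
    refine (hexp.const_mul ((t : ℂ) ^ (a - 1))).congr_deriv ?_
    rw [add_sub_cancel_right, cpow_sub _ _ (ofReal_ne_zero.2 ht.ne'), cpow_one]
    field_simp [ofReal_ne_zero.2 ht.ne']

theorem integral_cpow_mul_exp_neg_mul_Ioi_of_re_pos {a c : ℂ} (ha : 0 < a.re) (hc : 0 < c.re) :
    ∫ t in Ioi (0 : ℝ), (t : ℂ) ^ (a - 1) * exp (-(c * t)) = Gamma a * c ^ (-a) := by
  have hU : IsOpen {c : ℂ | 0 < c.re} := isOpen_lt continuous_const continuous_re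
  have hg : DifferentiableOn ℂ (fun c : ℂ => Gamma a * c ^ (-a)) {c | 0 < c.re} :=
    fun c hc => (differentiableAt_id.cpow_const (mem_slitPlane_iff.2 (Or.inl hc))).const_mul _
      |>.differentiableWithinAt
  have hreal : ∀ᶠ r : ℝ in 𝓝[≠] 1,
      (∫ t in Ioi (0 : ℝ), (t : ℂ) ^ (a - 1) * exp (-(r * t))) = Gamma a * (r : ℂ) ^ (-a) := by
    filter_upwards [nhdsWithin_le_nhds (lt_mem_nhds one_pos)] with r hr
    rw [integral_cpow_mul_exp_neg_mul_Ioi ha hr, one_div,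
      inv_cpow _ _ (by simpa [arg_ofReal_of_nonneg hr.le] using Real.pi_ne_zero.symm),
      ← cpow_neg, mul_comm]
  have hofReal : Tendsto ((↑) : ℝ → ℂ) (𝓝[≠] 1) (𝓝[≠] 1) :=
    tendsto_nhdsWithin_of_tendsto_nhds_of_eventually_within _
      ((continuous_ofReal.tendsto' 1 1 ofReal_one).mono_left nhdsWithin_le_nhds)
      (eventually_nhdsWithin_of_forall fun r hr => by
        rw [mem_compl_singleton_iff] at hr ⊢; exact_mod_cast hr)
  exact (differentiableOn_integral_cpow_mul_exp_neg_mul ha).analyticOnNhd hU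
    |>.eqOn_of_preconnected_of_frequently_eq (hg.analyticOnNhd hU)
      (convex_halfSpace_re_gt 0).isPreconnected (by simp : (1 : ℂ) ∈ {c : ℂ | 0 < c.re})
      (hofReal.frequently hreal.frequently) hc

lemma norm_cpow_le_of_re_pos {z w : ℂ} (hz : 0 < z.re) (hw : w.re ≤ 0) :
    ‖z ^ w‖ ≤ Real.exp (|w.im| * (π / 2)) * z.re ^ w.re := by
  have harg : -(|w.im| * (π / 2)) ≤ arg z * w.im :=
    calc -(|w.im| * (π / 2)) ≤ -|arg z * w.im| := by
          rw [abs_mul, mul_comm]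
          gcongr
          exact abs_arg_le_pi_div_two_iff.2 hz.le
      _ ≤ arg z * w.im := neg_abs_le _
  calc ‖z ^ w‖ ≤ ‖z‖ ^ w.re / Real.exp (arg z * w.im) := norm_cpow_le z w
    _ ≤ z.re ^ w.re / Real.exp (-(|w.im| * (π / 2))) :=
      div_le_div₀ (by positivity) (Real.rpow_le_rpow_of_nonpos hz (re_le_norm z) hw)
        (Real.exp_pos _) (Real.exp_le_exp.2 harg)
    _ = Real.exp (|w.im| * (π / 2)) * z.re ^ w.re := by
      rw [Real.exp_neg, div_inv_eq_mul, mul_comm]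

lemma integrableOn_rpow_mul_add_rpow_neg {a s r : ℝ} (ha : 0 < a) (has : a < s) (hr : 0 < r) :
    IntegrableOn (fun u : ℝ => u ^ (a - 1) * (r + u) ^ (-s)) (Ioi 0) := by
  have hcont : ContinuousOn (fun u : ℝ => u ^ (a - 1) * (r + u) ^ (-s)) (Ioi 0) :=
    fun u (hu : 0 < u) => ((continuousAt_id.rpow_const (Or.inl hu.ne')).mul
      ((continuousAt_const.add continuousAt_id).rpow_const
        (Or.inl (add_pos hr hu).ne'))).continuousWithinAt
  rw [← Ioc_union_Ioi_eq_Ioi zero_le_one]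
  refine IntegrableOn.union ?_ ?_
  · have hpow : IntegrableOn (fun u : ℝ => u ^ (a - 1)) (Ioc 0 1) := by
      rw [← intervalIntegrable_iff_integrableOn_Ioc_of_le zero_le_one]
      exact intervalIntegral.intervalIntegrable_rpow' (by linarith)
    refine (hpow.mul_const (r ^ (-s))).mono'
      ((hcont.mono Ioc_subset_Ioi_self).aestronglyMeasurable measurableSet_Ioc) ?_
    filter_upwards [ae_restrict_mem measurableSet_Ioc] with u hu
    have hu0 : 0 < u := hu.1
    rw [Real.norm_of_nonneg (by positivity)]
    exact mul_le_mul_of_nonneg_left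
      (Real.rpow_le_rpow_of_nonpos hr (by linarith) (by linarith)) (by positivity)
  · refine (integrableOn_Ioi_rpow_of_lt (a := a - 1 - s) (by linarith) one_pos).mono'
      ((hcont.mono (Ioi_subset_Ioi zero_le_one)).aestronglyMeasurable measurableSet_Ioi) ?_
    filter_upwards [ae_restrict_mem measurableSet_Ioi] with u (hu : 1 < u)
    have hu0 : 0 < u := one_pos.trans hu
    rw [Real.norm_of_nonneg (by positivity), sub_eq_add_neg _ s, Real.rpow_add hu0]
    exact mul_le_mul_of_nonneg_left
      (Real.rpow_le_rpow_of_nonpos hu0 (by linarith) (by linarith)) (by positivity)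

lemma integrable_cpow_mul_cpow_mul_exp_neg_add_mul {a s c : ℂ} (ha : 0 < a.re) (has : a.re < s.re)
    (hc : 0 < c.re) :
    Integrable (Function.uncurry fun u y : ℝ =>
        (u : ℂ) ^ (a - 1) * ((y : ℂ) ^ (s - 1) * exp (-((c + u) * y))))
      ((volume.restrict (Ioi 0)).prod (volume.restrict (Ioi 0))) := by
  have hs : 0 < s.re := ha.trans has
  refine (integrable_prod_iff ?_).2 ⟨?_, ?_⟩
  · rw [Measure.prod_restrict]
    refine ContinuousOn.aestronglyMeasurable ?_ (measurableSet_Ioi.prod measurableSet_Ioi)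
    refine ContinuousOn.mul ?_ (ContinuousOn.mul ?_ (by fun_prop))
    · exact (continuous_ofReal.comp continuous_fst).continuousOn.cpow continuousOn_const
        fun p hp => ofReal_mem_slitPlane.2 hp.1
    · exact (continuous_ofReal.comp continuous_snd).continuousOn.cpow continuousOn_const
        fun p hp => ofReal_mem_slitPlane.2 hp.2
  · filter_upwards [ae_restrict_mem measurableSet_Ioi] with u (hu : 0 < u)
    simp only [Function.uncurry_apply_pair]
    refine (integrableOn_cpow_mul_exp_neg_mul (c := c + u) hs ?_).const_mul _
    rw [add_re, ofReal_re]
    linarith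
  · refine ((integrableOn_rpow_mul_add_rpow_neg ha has hc).const_mul (Real.Gamma s.re)).congr ?_
    filter_upwards [ae_restrict_mem measurableSet_Ioi] with u (hu : 0 < u)
    have hcu : 0 < c.re + u := by linarith
    calc Real.Gamma s.re * (u ^ (a.re - 1) * (c.re + u) ^ (-s.re))
        = ∫ y in Ioi (0 : ℝ),
            u ^ (a.re - 1) * (y ^ (s.re - 1) * Real.exp (-((c.re + u) * y))) := by
          rw [integral_const_mul, Real.integral_rpow_mul_exp_neg_mul_Ioi hs hcu, one_div,
            Real.inv_rpow hcu.le, ← Real.rpow_neg hcu.le]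
          ring
      _ = _ := by
          refine setIntegral_congr_fun measurableSet_Ioi fun y hy => ?_
          rw [Function.uncurry_apply_pair, norm_mul, norm_cpow_eq_rpow_re_of_pos hu,
            norm_cpow_mul_exp_neg_mul _ _ hy]
          simp

theorem integral_cpow_mul_add_cpow_neg {a s c : ℂ} (ha : 0 < a.re) (has : a.re < s.re)
    (hc : 0 < c.re) :
    ∫ u in Ioi (0 : ℝ), (u : ℂ) ^ (a - 1) * (c + u) ^ (-s)
      = Gamma a * Gamma (s - a) / Gamma s * c ^ (a - s) := by
  have hs : 0 < s.re := ha.trans has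
  have hsa : 0 < (s - a).re := by simpa using has
  have hswap := integral_integral_swap (integrable_cpow_mul_cpow_mul_exp_neg_add_mul ha has hc)
  have hinner_y : ∀ u ∈ Ioi (0 : ℝ), ∫ y in Ioi (0 : ℝ),
      (u : ℂ) ^ (a - 1) * ((y : ℂ) ^ (s - 1) * exp (-((c + u) * y)))
        = Gamma s * ((u : ℂ) ^ (a - 1) * (c + u) ^ (-s)) := by
    intro u (hu : 0 < u)
    have hcu : 0 < (c + u).re := by rw [add_re, ofReal_re]; linarith
    rw [integral_const_mul, integral_cpow_mul_exp_neg_mul_Ioi_of_re_pos hs hcu]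
    ring
  have hinner_u : ∀ y ∈ Ioi (0 : ℝ), ∫ u in Ioi (0 : ℝ),
      (u : ℂ) ^ (a - 1) * ((y : ℂ) ^ (s - 1) * exp (-((c + u) * y)))
        = Gamma a * ((y : ℂ) ^ (s - a - 1) * exp (-(c * y))) := by
    intro y (hy : 0 < y)
    calc _ = ∫ u in Ioi (0 : ℝ), ((y : ℂ) ^ (s - 1) * exp (-(c * y)))
            * ((u : ℂ) ^ (a - 1) * exp (-((y : ℂ) * u))) := by
          refine integral_congr_ae (Eventually.of_forall fun u => ?_)
          dsimp only
          rw [add_mul, neg_add, exp_add, mul_comm (u : ℂ)]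
          ring
      _ = _ := by
          rw [integral_const_mul,
            integral_cpow_mul_exp_neg_mul_Ioi_of_re_pos ha (by rwa [ofReal_re]),
            sub_sub, add_comm a 1, ← sub_sub, sub_eq_add_neg (s - 1) a,
            cpow_add _ _ (ofReal_ne_zero.2 hy.ne')]
          ring
  rw [setIntegral_congr_fun measurableSet_Ioi hinner_y,
    setIntegral_congr_fun measurableSet_Ioi hinner_u,
    integral_const_mul, integral_const_mul, integral_cpow_mul_exp_neg_mul_Ioi_of_re_pos hsa hc,
    neg_sub] at hswap
  rw [div_mul_eq_mul_div, eq_div_iff (Gamma_ne_zero_of_re_pos hs)]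
  linear_combination hswap

section TermwiseIntegration

variable {α E : Type*} [MeasurableSpace α] {μ : Measure α} [NormedAddCommGroup E] [CompleteSpace E]
  {F : ℕ → α → E} {b : ℕ → ℝ} {g : α → ℝ}

lemma integrable_tsum_of_norm_le_mul (hF : ∀ n, AEStronglyMeasurable (F n) μ) (hb : Summable b)
    (hg : Integrable g μ) (hFg : ∀ n, ∀ᵐ x ∂μ, ‖F n x‖ ≤ b n * g x) :
    Integrable (fun x => ∑' n, F n x) μ := by
  have hsum : ∀ᵐ x ∂μ,
      HasSum (fun n => F n x) (∑' n, F n x) ∧ ‖∑' n, F n x‖ ≤ (∑' n, b n) * g x := by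
    filter_upwards [ae_all_iff.2 hFg] with x hx
    refine ⟨(Summable.of_norm_bounded (hb.mul_right (g x)) hx).hasSum, ?_⟩
    exact tsum_of_norm_bounded (hb.hasSum.mul_right (g x)) hx
  refine (hg.const_mul (∑' n, b n)).mono' ?_ (hsum.mono fun x hx => hx.2)
  exact aestronglyMeasurable_of_tendsto_ae atTop
    (fun n => Finset.aestronglyMeasurable_fun_sum _ fun m _ => hF m)
    (hsum.mono fun x hx => hx.1.tendsto_sum_nat)

lemma hasSum_integral_of_norm_le_mul [NormedSpace ℝ E] (hF : ∀ n, AEStronglyMeasurable (F n) μ)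
    (hb : Summable b) (hg : Integrable g μ) (hFg : ∀ n, ∀ᵐ x ∂μ, ‖F n x‖ ≤ b n * g x) :
    HasSum (fun n => ∫ x, F n x ∂μ) (∫ x, ∑' n, F n x ∂μ) := by
  refine hasSum_integral_of_dominated_convergence (fun n x => b n * g x) hF hFg
    (ae_of_all _ fun x => hb.mul_right (g x)) ?_ ?_
  · simpa only [tsum_mul_right] using hg.const_mul (∑' n, b n)
  · filter_upwards [ae_all_iff.2 hFg] with x hx
    exact (Summable.of_norm_bounded (hb.mul_right (g x)) hx).hasSum

end TermwiseIntegration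

lemma norm_exp_two_pi_I_mul_natCast (t : ℂ) (m : ℕ) :
    ‖exp (2 * π * I * t * m)‖ = Real.exp (-(2 * π * t.im)) ^ m := by
  rw [show 2 * π * I * t * m = m * (2 * π * I * t) by ring, exp_nat_mul, norm_pow, norm_exp]
  simp

section LerchIntegrand

variable {t x s a : ℂ} (m : ℕ)

lemma continuousOn_lerch_integrand (hx : 0 < x.re) :
    ContinuousOn (fun u : ℝ => (u : ℂ) ^ (a - 1) * (((m : ℂ) + (x + u)) ^ (-s)
      * exp (2 * π * I * t * m))) (Ioi 0) := by
  refine ContinuousOn.mul ?_ (ContinuousOn.mul ?_ continuousOn_const)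
  · exact continuous_ofReal.continuousOn.cpow continuousOn_const
      fun u hu => ofReal_mem_slitPlane.2 hu
  · refine (by fun_prop : Continuous fun u : ℝ => (m : ℂ) + (x + u)).continuousOn.cpow
      continuousOn_const fun u (hu : 0 < u) => mem_slitPlane_iff.2 (Or.inl ?_)
    simp only [add_re, natCast_re, ofReal_re]
    positivity

lemma norm_lerch_integrand_le (hx : 0 < x.re) (hs : 0 ≤ s.re) {u : ℝ} (hu : 0 < u) :
    ‖(u : ℂ) ^ (a - 1) * (((m : ℂ) + (x + u)) ^ (-s) * exp (2 * π * I * t * m))‖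
      ≤ Real.exp (-(2 * π * t.im)) ^ m
        * (Real.exp (|s.im| * (π / 2)) * (u ^ (a.re - 1) * (x.re + u) ^ (-s.re))) := by
  have hre : ((m : ℂ) + (x + u)).re = m + (x.re + u) := by simp
  have hpow : ‖((m : ℂ) + (x + u)) ^ (-s)‖
      ≤ Real.exp (|s.im| * (π / 2)) * (x.re + u) ^ (-s.re) := by
    refine (norm_cpow_le_of_re_pos (by rw [hre]; positivity) (by simpa using hs)).trans ?_
    rw [hre, neg_im, abs_neg, neg_re]
    gcongr ?_ * ?_
    exact Real.rpow_le_rpow_of_nonpos (by positivity) (by linarith [m.cast_nonneg (α := ℝ)])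
      (by linarith)
  rw [norm_mul, norm_mul, norm_cpow_eq_rpow_re_of_pos hu, norm_exp_two_pi_I_mul_natCast, sub_re,
    one_re]
  calc u ^ (a.re - 1) * (‖((m : ℂ) + (x + u)) ^ (-s)‖ * Real.exp (-(2 * π * t.im)) ^ m)
      ≤ u ^ (a.re - 1) * (Real.exp (|s.im| * (π / 2)) * (x.re + u) ^ (-s.re)
          * Real.exp (-(2 * π * t.im)) ^ m) := by gcongr
    _ = _ := by ring

lemma integral_lerch_integrand (hx : 0 < x.re) (ha : 0 < a.re) (has : a.re < s.re) :
    ∫ u in Ioi (0 : ℝ),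
        (u : ℂ) ^ (a - 1) * (((m : ℂ) + (x + u)) ^ (-s) * exp (2 * π * I * t * m))
      = Gamma a * Gamma (s - a) / Gamma s
        * (((m : ℂ) + x) ^ (-(s - a)) * exp (2 * π * I * t * m)) := by
  have hmx : 0 < ((m : ℂ) + x).re := by rw [add_re, natCast_re]; positivity
  simp_rw [← mul_assoc, ← add_assoc]
  rw [integral_mul_const, integral_cpow_mul_add_cpow_neg ha has hmx, neg_sub]

end LerchIntegrand

theorem integral_cpow_mul_lerchZeta_add {t x s a : ℂ} (ht : 0 < t.im) (hx : 0 < x.re)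
    (ha : 0 < a.re) (has : a.re < s.re) :
    IntegrableOn (fun u : ℝ => (u : ℂ) ^ (a - 1) * lerchZeta t (x + u) s) (Ioi 0) ∧
      ∫ u in Ioi (0 : ℝ), (u : ℂ) ^ (a - 1) * lerchZeta t (x + u) s
        = Gamma a * Gamma (s - a) / Gamma s * lerchZeta t x (s - a) := by
  set F : ℕ → ℝ → ℂ := fun m u =>
    (u : ℂ) ^ (a - 1) * (((m : ℂ) + (x + u)) ^ (-s) * exp (2 * π * I * t * m))
  have hseries : (fun u : ℝ => (u : ℂ) ^ (a - 1) * lerchZeta t (x + u) s)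
      = fun u => ∑' m, F m u :=
    funext fun u => tsum_mul_left.symm
  have hmeas (m : ℕ) : AEStronglyMeasurable (F m) (volume.restrict (Ioi 0)) :=
    (continuousOn_lerch_integrand m hx).aestronglyMeasurable measurableSet_Ioi
  have hgeom : Summable fun m : ℕ => Real.exp (-(2 * π * t.im)) ^ m :=
    summable_geometric_of_lt_one (Real.exp_nonneg _)
      (Real.exp_lt_one_iff.2 (by nlinarith [Real.pi_pos]))
  have hdom := (integrableOn_rpow_mul_add_rpow_neg ha has hx).const_mul
    (Real.exp (|s.im| * (π / 2)))
  have hbound (m : ℕ) : ∀ᵐ u ∂(volume.restrict (Ioi 0)), ‖F m u‖ ≤ _ * _ :=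
    (ae_restrict_mem measurableSet_Ioi).mono fun u hu =>
      norm_lerch_integrand_le m hx (ha.trans has).le hu
  rw [hseries]
  refine ⟨integrable_tsum_of_norm_le_mul hmeas hgeom hdom hbound, ?_⟩
  rw [← (hasSum_integral_of_norm_le_mul hmeas hgeom hdom hbound).tsum_eq, lerchZeta,
    ← tsum_mul_left]
  exact tsum_congr fun m => integral_lerch_integrand m hx ha has

theorem weyl_fracint_lerch_x (t x s α : ℂ) (ht : 0 < t.im) (hx : 0 < x.re)
    (hα : α.re < 0) (hsα : 0 < (s + α).re) :
    IntegrableOn (fun u : ℝ => (u : ℂ) ^ (-α - 1) * lerchZeta t (x + u) s) (Set.Ioi 0) ∧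
    (1 / Complex.Gamma (-α)) *
        (∫ u in Set.Ioi (0 : ℝ), (u : ℂ) ^ (-α - 1) * lerchZeta t (x + u) s)
      = (Complex.Gamma (s + α) / Complex.Gamma s) * lerchZeta t x (s + α) := by
  have ha : 0 < (-α).re := by simpa using hα
  have has : (-α).re < s.re := by rw [add_re] at hsα; rw [neg_re]; linarith
  obtain ⟨hint, heq⟩ := integral_cpow_mul_lerchZeta_add ht hx ha has
  refine ⟨hint, ?_⟩
  rw [heq, sub_neg_eq_add]
  field_simp [Gamma_ne_zero_of_re_pos ha]
end
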